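/- arXiv:1709.06650 — 5 statements merged into one kernel-verified Lean document; each statement's English description precedes it below -/
import Mathlib

section
/- Let G be a graph on vertex set {1,...,n} with fractional chromatic number χ_f(G). Then every QTF f : {-1,1}^n → {-1,1} supported on G satisfies I[f] ≤ √(χ_f(G)) · √n. -/
open Finset
open scoped Classical

noncomputable section

/-- The Boolean cube `{-1,1}^V` as a finset of functions `V → ℤ`. -/
def cube (V : Type*) [Fintype V] [DecidableEq V] : Finset (V → ℤ) :=
  Fintype.piFinset fun _ => ({-1, 1} : Finset ℤ)

/-- Negate the `i`-th coordinate. -/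
def flipAt {V : Type*} [DecidableEq V] (x : V → ℤ) (i : V) : V → ℤ :=
  Function.update x i (-(x i))

/-- Influence of coordinate `i` on `f`: the probability over a uniform point of the cube
that flipping coordinate `i` changes the value of `f`. -/
def coordInf {V : Type*} [Fintype V] [DecidableEq V] {α : Type*} (f : (V → ℤ) → α) (i : V) : ℝ :=
  (∑ x ∈ cube V, if f x ≠ f (flipAt x i) then (1 : ℝ) else 0) / (cube V).card

/-- Total influence of `f`. -/
def totalInf {V : Type*} [Fintype V] [DecidableEq V] {α : Type*} (f : (V → ℤ) → α) : ℝ :=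
  ∑ i : V, coordInf f i

/-- Sign function, with `sgn 0 = 0`. -/
def sgn (t : ℝ) : ℤ := if 0 < t then 1 else if t < 0 then -1 else 0

/-- A quadratic multilinear polynomial `∑_{i<j} a_{ij} x_i x_j + ∑_i b_i x_i + c`. -/
def quadPoly {V : Type*} [Fintype V] [LinearOrder V] (a : V → V → ℝ) (b : V → ℝ) (c : ℝ)
    (x : V → ℤ) : ℝ :=
  (∑ i : V, ∑ j : V, if i < j then a i j * x i * x j else 0) + (∑ i : V, b i * x i) + c

/-- `f` is a QTF supported on the graph `G`: it has a quadratic representation whose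
cross terms only involve edges of `G`, and whose polynomial is nonvanishing on the cube. -/
def IsQTFSupportedOn {V : Type*} [Fintype V] [LinearOrder V] (G : SimpleGraph V)
    (f : (V → ℤ) → ℤ) : Prop :=
  ∃ a b c, (∀ i j : V, i < j → a i j ≠ 0 → G.Adj i j) ∧
    (∀ x ∈ cube V, quadPoly a b c x ≠ 0) ∧
    (∀ x ∈ cube V, f x = sgn (quadPoly a b c x))

/-- The fractional chromatic number of `G`: the optimal value of the fractional covering LP
over independent sets. -/
def fracChromNum {n : ℕ} (G : SimpleGraph (Fin n)) : ℝ :=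
  sInf {r : ℝ | ∃ w : Finset (Fin n) → ℝ, (∀ S, 0 ≤ w S) ∧
    (∀ S, w S ≠ 0 → ∀ i ∈ S, ∀ j ∈ S, ¬G.Adj i j) ∧
    (∀ v : Fin n, 1 ≤ ∑ S : Finset (Fin n), if v ∈ S then w S else 0) ∧
    r = ∑ S : Finset (Fin n), w S}

/-!
Write `f = sgn p` and `x⁽ⁱ⁾` for `x` with coordinate `i` flipped. Whenever `f x ≠ f x⁽ⁱ⁾`, the
values `p x` and `p x⁽ⁱ⁾` have opposite signs, so `f x = gᵢ x := sgn (p x - p x⁽ⁱ⁾)`; since `gᵢ` is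
odd under the flip, `Inf_i[f] = 𝔼[f gᵢ]`. For quadratic `p` one has `p x - p x⁽ⁱ⁾ = 2 xᵢ Dᵢp(x)`
with `Dᵢp` affine in the neighbours of `i`, so for non-adjacent `i ≠ j` the function `gⱼ` is even
in `xᵢ` while `gᵢ` is odd: the `gᵢ` are orthogonal along an independent set `S`. Cauchy–Schwarz
gives `∑_{i ∈ S} cᵢ Inf_i[f] ≤ ‖∑ cᵢ gᵢ‖₂ ≤ (∑_{i ∈ S} cᵢ²)^{1/2}`. Averaging over a fractional
colouring `w` with `cᵢ = 1 / mᵢ`, where `mᵢ ≥ 1` is the weight covering `i`, and applying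
Cauchy–Schwarz once more yields `I[f] ≤ √(∑ w) · √n`.
-/

open Matrix

namespace QTF

section Cube

variable {V : Type*} [DecidableEq V]

lemma mem_cube [Fintype V] {x : V → ℤ} : x ∈ cube V ↔ ∀ i, x i = -1 ∨ x i = 1 := by
  simp [cube, Fintype.mem_piFinset]

lemma flipAt_apply_self (x : V → ℤ) (i : V) : flipAt x i i = -x i := by
  simp [flipAt]

lemma flipAt_apply_of_ne (x : V → ℤ) {i j : V} (h : j ≠ i) : flipAt x i j = x j :=
  Function.update_of_ne h _ _

lemma flipAt_flipAt (x : V → ℤ) (i : V) : flipAt (flipAt x i) i = x := by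
  simp [flipAt]

lemma cast_comp_flipAt (x : V → ℤ) (i : V) :
    ((↑) ∘ flipAt x i : V → ℝ) = (↑) ∘ x + Pi.single i (-2 * (x i : ℝ)) := by
  funext j
  by_cases h : j = i
  · subst h; simp [flipAt_apply_self]; ring
  · simp [flipAt_apply_of_ne _ h, h]

lemma flipAt_mem_cube [Fintype V] {x : V → ℤ} (hx : x ∈ cube V) (i : V) :
    flipAt x i ∈ cube V := by
  rw [mem_cube] at hx ⊢
  intro j
  by_cases h : j = i
  · subst h; rw [flipAt_apply_self]; rcases hx j with h | h <;> simp [h]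
  · rw [flipAt_apply_of_ne _ h]; exact hx j

lemma sum_cube_flipAt [Fintype V] {M : Type*} [AddCommMonoid M] (F : (V → ℤ) → M) (i : V) :
    ∑ x ∈ cube V, F (flipAt x i) = ∑ x ∈ cube V, F x :=
  Finset.sum_nbij' (flipAt · i) (flipAt · i) (fun _ hx => flipAt_mem_cube hx i)
    (fun _ hx => flipAt_mem_cube hx i) (fun _ _ => flipAt_flipAt _ i)
    (fun _ _ => flipAt_flipAt _ i) (fun _ _ => rfl)

lemma sum_cube_eq_zero_of_flipAt_eq_neg [Fintype V] {F : (V → ℤ) → ℝ} (i : V)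
    (hF : ∀ x ∈ cube V, F (flipAt x i) = -F x) : ∑ x ∈ cube V, F x = 0 := by
  have h := sum_cube_flipAt F i
  rw [Finset.sum_congr rfl hF, Finset.sum_neg_distrib] at h
  linarith

end Cube

lemma sgn_of_pos {t : ℝ} (h : 0 < t) : sgn t = 1 := if_pos h

lemma sgn_of_neg {t : ℝ} (h : t < 0) : sgn t = -1 := by simp [sgn, h, h.not_gt]

lemma sgn_zero : sgn 0 = 0 := by simp [sgn]

lemma sgn_neg (t : ℝ) : sgn (-t) = -sgn t := by
  rcases lt_trichotomy t 0 with h | rfl | h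
  · rw [sgn_of_pos (neg_pos.2 h), sgn_of_neg h, neg_neg]
  · rw [neg_zero, sgn_zero, neg_zero]
  · rw [sgn_of_neg (neg_lt_zero.2 h), sgn_of_pos h]

lemma sgn_eq_one_or_eq_neg_one {t : ℝ} (h : t ≠ 0) : sgn t = 1 ∨ sgn t = -1 :=
  h.gt_or_lt.imp sgn_of_pos sgn_of_neg

lemma sgn_sq_le_one (t : ℝ) : (sgn t : ℝ) ^ 2 ≤ 1 := by
  unfold sgn; split_ifs <;> norm_num

/-- If `p` and `q` have opposite signs, then `sgn p = sgn (p - q)`. -/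
lemma ite_sgn_ne_sgn {p q : ℝ} (hp : p ≠ 0) (hq : q ≠ 0) :
    (if sgn p ≠ sgn q then (1 : ℝ) else 0) = ((sgn p : ℝ) - sgn q) / 2 * sgn (p - q) := by
  rcases hp.lt_or_gt with hp | hp <;> rcases hq.lt_or_gt with hq | hq
  · simp [sgn_of_neg hp, sgn_of_neg hq]
  · rw [sgn_of_neg hp, sgn_of_pos hq, sgn_of_neg (by linarith : p - q < 0)]; norm_num
  · rw [sgn_of_pos hp, sgn_of_neg hq, sgn_of_pos (by linarith : 0 < p - q)]; norm_num
  · simp [sgn_of_pos hp, sgn_of_pos hq]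

lemma sum_sq_sum_le_of_orthogonal {α ι : Type*} (s : Finset α) (S : Finset ι)
    {g : ι → α → ℝ} (hg : ∀ i ∈ S, ∀ x ∈ s, g i x ^ 2 ≤ 1)
    (horth : ∀ i ∈ S, ∀ j ∈ S, i ≠ j → ∑ x ∈ s, g i x * g j x = 0) (c : ι → ℝ) :
    ∑ x ∈ s, (∑ i ∈ S, c i * g i x) ^ 2 ≤ s.card * ∑ i ∈ S, c i ^ 2 := by
  have hdiag : ∀ i ∈ S, ∑ j ∈ S, c i * c j * ∑ x ∈ s, g i x * g j x
      = c i ^ 2 * ∑ x ∈ s, g i x ^ 2 := by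
    intro i hi
    rw [Finset.sum_eq_single_of_mem i hi fun j hj hji => by
      rw [horth i hi j hj hji.symm, mul_zero]]
    simp only [sq]
  calc ∑ x ∈ s, (∑ i ∈ S, c i * g i x) ^ 2
      = ∑ x ∈ s, ∑ i ∈ S, ∑ j ∈ S, c i * c j * (g i x * g j x) :=
        Finset.sum_congr rfl fun x _ => by
          rw [sq, Finset.sum_mul_sum]
          exact Finset.sum_congr rfl fun i _ => Finset.sum_congr rfl fun j _ => by ring
    _ = ∑ i ∈ S, ∑ j ∈ S, c i * c j * ∑ x ∈ s, g i x * g j x := by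
        rw [Finset.sum_comm]
        refine Finset.sum_congr rfl fun i _ => ?_
        rw [Finset.sum_comm]
        simp only [Finset.mul_sum]
    _ = ∑ i ∈ S, c i ^ 2 * ∑ x ∈ s, g i x ^ 2 := Finset.sum_congr rfl hdiag
    _ ≤ ∑ i ∈ S, c i ^ 2 * s.card := by
        gcongr with i hi
        simpa using Finset.sum_le_sum (hg i hi)
    _ = s.card * ∑ i ∈ S, c i ^ 2 := by rw [Finset.mul_sum]; simp only [mul_comm]

section ThresholdFunction

variable {V : Type*} [DecidableEq V]

def diffSign (p : (V → ℤ) → ℝ) (i : V) (x : V → ℤ) : ℝ := sgn (p x - p (flipAt x i))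

lemma diffSign_flipAt_self (p : (V → ℤ) → ℝ) (i : V) (x : V → ℤ) :
    diffSign p i (flipAt x i) = -diffSign p i x := by
  rw [diffSign, diffSign, flipAt_flipAt, ← neg_sub, sgn_neg, Int.cast_neg]

lemma diffSign_sq_le_one (p : (V → ℤ) → ℝ) (i : V) (x : V → ℤ) : diffSign p i x ^ 2 ≤ 1 :=
  sgn_sq_le_one _

lemma sum_cube_diffSign_mul_diffSign_eq_zero [Fintype V] (p : (V → ℤ) → ℝ) {i j : V}
    (h : ∀ x ∈ cube V, diffSign p j (flipAt x i) = diffSign p j x) :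
    ∑ x ∈ cube V, diffSign p i x * diffSign p j x = 0 :=
  sum_cube_eq_zero_of_flipAt_eq_neg i fun x hx => by
    rw [diffSign_flipAt_self, h x hx, neg_mul]

variable [Fintype V] {p : (V → ℤ) → ℝ} {f : (V → ℤ) → ℤ}

lemma coordInf_eq_sum_mul_diffSign (hp : ∀ x ∈ cube V, p x ≠ 0)
    (hf : ∀ x ∈ cube V, f x = sgn (p x)) (i : V) :
    coordInf f i = (∑ x ∈ cube V, (f x : ℝ) * diffSign p i x) / (cube V).card := by
  have hflip : ∀ x ∈ cube V, (if f x ≠ f (flipAt x i) then (1 : ℝ) else 0)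
      = (f x : ℝ) * diffSign p i x - ((f x : ℝ) + f (flipAt x i)) * diffSign p i x / 2 := by
    intro x hx
    have hx' := flipAt_mem_cube hx i
    rw [hf x hx, hf _ hx', ite_sgn_ne_sgn (hp x hx) (hp _ hx'), diffSign]
    ring
  have hanti : ∑ x ∈ cube V, ((f x : ℝ) + f (flipAt x i)) * diffSign p i x = 0 :=
    sum_cube_eq_zero_of_flipAt_eq_neg i fun x _ => by
      rw [flipAt_flipAt, diffSign_flipAt_self]; ring
  unfold coordInf
  congr 1
  calc _ = ∑ x ∈ cube V, ((f x : ℝ) * diffSign p i x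
          - ((f x : ℝ) + f (flipAt x i)) * diffSign p i x / 2) :=
        Finset.sum_congr rfl fun x hx => by convert hflip x hx
    _ = ∑ x ∈ cube V, (f x : ℝ) * diffSign p i x := by
        rw [Finset.sum_sub_distrib, ← Finset.sum_div, hanti, zero_div, sub_zero]

lemma sum_mul_coordInf_le_sqrt (hp : ∀ x ∈ cube V, p x ≠ 0)
    (hf : ∀ x ∈ cube V, f x = sgn (p x)) (S : Finset V)
    (horth : ∀ i ∈ S, ∀ j ∈ S, i ≠ j → ∀ x ∈ cube V, diffSign p j (flipAt x i) = diffSign p j x)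
    (c : V → ℝ) :
    ∑ i ∈ S, c i * coordInf f i ≤ √(∑ i ∈ S, c i ^ 2) := by
  set N : ℝ := ((cube V).card : ℝ)
  have hN : 0 < N := Nat.cast_pos.2 (Finset.card_pos.2 ⟨fun _ => 1, by simp [mem_cube]⟩)
  set Y : (V → ℤ) → ℝ := fun x => ∑ i ∈ S, c i * diffSign p i x
  have hfY : ∑ i ∈ S, c i * coordInf f i = (∑ x ∈ cube V, (f x : ℝ) * Y x) / N := by
    simp only [coordInf_eq_sum_mul_diffSign hp hf, Y, Finset.mul_sum, Finset.sum_div]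
    rw [Finset.sum_comm]
    exact Finset.sum_congr rfl fun i _ => Finset.sum_congr rfl fun x _ => by ring
  have hf2 : ∑ x ∈ cube V, (f x : ℝ) ^ 2 = N := by
    rw [Finset.sum_congr rfl fun x hx => ?_, Finset.sum_const, nsmul_one]
    rcases sgn_eq_one_or_eq_neg_one (hp x hx) with h | h <;> simp [hf x hx, h]
  have hY2 : ∑ x ∈ cube V, Y x ^ 2 ≤ N * ∑ i ∈ S, c i ^ 2 :=
    sum_sq_sum_le_of_orthogonal _ S (fun i _ x _ => diffSign_sq_le_one p i x)
      (fun i hi j hj hij => sum_cube_diffSign_mul_diffSign_eq_zero p (horth i hi j hj hij)) c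
  have hcs : (∑ x ∈ cube V, (f x : ℝ) * Y x) ^ 2 ≤ N * (N * ∑ i ∈ S, c i ^ 2) :=
    (Finset.sum_mul_sq_le_sq_mul_sq _ _ _).trans (by rw [hf2]; gcongr)
  rw [hfY]
  refine Real.le_sqrt_of_sq_le ?_
  rw [div_pow, div_le_iff₀ (by positivity)]
  linarith

end ThresholdFunction

lemma dotProduct_mulVec_add_single {n R : Type*} [Fintype n] [DecidableEq n] [CommRing R]
    {M : Matrix n n R} {i : n} (hM : M i i = 0) (v : n → R) (t : R) :
    (v + Pi.single i t) ⬝ᵥ M *ᵥ (v + Pi.single i t) = v ⬝ᵥ M *ᵥ v + t * ((M + Mᵀ) *ᵥ v) i := by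
  have hcol : M *ᵥ Pi.single i t = fun k => M k i * t := funext fun _ => dotProduct_single _ _ _
  have hrow : (v ⬝ᵥ fun k => M k i * t) = t * (Mᵀ *ᵥ v) i := by
    simp only [dotProduct, mulVec, transpose_apply, Finset.mul_sum]
    exact Finset.sum_congr rfl fun k _ => by ring
  simp only [mulVec_add, add_dotProduct, dotProduct_add, hcol, single_dotProduct, hM, hrow,
    add_mulVec, Pi.add_apply]
  ring

section Quadratic

variable {V : Type*} [LinearOrder V]

def upperMatrix (a : V → V → ℝ) : Matrix V V ℝ := Matrix.of fun i j => if i < j then a i j else 0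

def coefMatrix (a : V → V → ℝ) : Matrix V V ℝ := upperMatrix a + (upperMatrix a)ᵀ

def quadDeriv [Fintype V] (a : V → V → ℝ) (b : V → ℝ) (i : V) (x : V → ℤ) : ℝ :=
  b i + (coefMatrix a *ᵥ ((↑) ∘ x)) i

lemma quadPoly_eq_dotProduct [Fintype V] (a : V → V → ℝ) (b : V → ℝ) (c : ℝ) (x : V → ℤ) :
    quadPoly a b c x = ((↑) ∘ x) ⬝ᵥ upperMatrix a *ᵥ ((↑) ∘ x) + b ⬝ᵥ ((↑) ∘ x) + c := by
  simp only [quadPoly, dotProduct, mulVec, upperMatrix, of_apply, Function.comp_apply,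
    Finset.mul_sum]
  congr 2
  exact Finset.sum_congr rfl fun i _ => Finset.sum_congr rfl fun j _ => by split_ifs <;> ring

lemma quadPoly_sub_quadPoly_flipAt [Fintype V] (a : V → V → ℝ) (b : V → ℝ) (c : ℝ)
    (x : V → ℤ) (i : V) :
    quadPoly a b c x - quadPoly a b c (flipAt x i) = 2 * x i * quadDeriv a b i x := by
  rw [quadPoly_eq_dotProduct, quadPoly_eq_dotProduct, cast_comp_flipAt,
    dotProduct_mulVec_add_single (by simp [upperMatrix]), dotProduct_add,
    dotProduct_single, quadDeriv, coefMatrix]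
  ring

lemma quadDeriv_flipAt [Fintype V] (a : V → V → ℝ) (b : V → ℝ) (x : V → ℤ) (i j : V) :
    quadDeriv a b j (flipAt x i) = quadDeriv a b j x - 2 * x i * coefMatrix a j i := by
  rw [quadDeriv, quadDeriv, cast_comp_flipAt, Matrix.mulVec_add, Pi.add_apply,
    Matrix.mulVec, Matrix.mulVec, dotProduct_single]
  ring

lemma diffSign_quadPoly_flipAt [Fintype V] {a : V → V → ℝ} (b : V → ℝ) (c : ℝ) {i j : V}
    (hij : i ≠ j) (ha : coefMatrix a j i = 0) (x : V → ℤ) :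
    diffSign (quadPoly a b c) j (flipAt x i) = diffSign (quadPoly a b c) j x := by
  rw [diffSign, diffSign, quadPoly_sub_quadPoly_flipAt, quadPoly_sub_quadPoly_flipAt,
    quadDeriv_flipAt, ha, flipAt_apply_of_ne _ hij.symm, mul_zero, sub_zero]

lemma coefMatrix_eq_zero_of_not_adj {G : SimpleGraph V} {a : V → V → ℝ}
    (hG : ∀ i j : V, i < j → a i j ≠ 0 → G.Adj i j) {i j : V} (hij : ¬G.Adj i j) :
    coefMatrix a i j = 0 := by
  rcases lt_trichotomy i j with h | rfl | h
  · simpa [coefMatrix, upperMatrix, h, h.not_gt] using mt (hG i j h) hij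
  · simp [coefMatrix, upperMatrix]
  · simpa [coefMatrix, upperMatrix, h, h.not_gt] using
      mt (hG j i h) (mt SimpleGraph.Adj.symm hij)

end Quadratic

section FractionalCover

variable {V : Type*} [Fintype V] [DecidableEq V]

lemma sum_mul_sum_mem_comm (w : Finset V → ℝ) (h : V → ℝ) :
    ∑ S : Finset V, w S * ∑ i ∈ S, h i =
      ∑ i : V, h i * ∑ S : Finset V, if i ∈ S then w S else 0 := by
  simp only [Finset.mul_sum, mul_ite, mul_zero]
  rw [Finset.sum_comm]
  refine Finset.sum_congr rfl fun S _ => ?_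
  rw [Finset.sum_ite_mem, Finset.univ_inter]
  exact Finset.sum_congr rfl fun i _ => mul_comm _ _

lemma sum_le_sqrt_sum_mul_sqrt_card {I : V → ℝ} {w : Finset V → ℝ} (hw : ∀ S, 0 ≤ w S)
    (hcov : ∀ v, 1 ≤ ∑ S : Finset V, if v ∈ S then w S else 0)
    (hI : ∀ S, w S ≠ 0 → ∀ c : V → ℝ, ∑ i ∈ S, c i * I i ≤ √(∑ i ∈ S, c i ^ 2)) :
    ∑ i, I i ≤ √(∑ S, w S) * √(Fintype.card V) := by
  -- the set `S` is charged with the weights `cᵢ = 1 / mᵢ`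
  set m : V → ℝ := fun v => ∑ S : Finset V, if v ∈ S then w S else 0
  have hm : ∀ v, 0 < m v := fun v => one_pos.trans_le (hcov v)
  set u : Finset V → ℝ := fun S => ∑ i ∈ S, (m i)⁻¹ ^ 2
  have hwu : ∑ S, w S * u S ≤ Fintype.card V := by
    rw [sum_mul_sum_mem_comm]
    calc ∑ i, (m i)⁻¹ ^ 2 * m i = ∑ i, (m i)⁻¹ := Finset.sum_congr rfl fun i _ => by
          rw [sq, mul_assoc, inv_mul_cancel₀ (hm i).ne', mul_one]
      _ ≤ ∑ _i : V, (1 : ℝ) := Finset.sum_le_sum fun i _ => inv_le_one_of_one_le₀ (hcov i)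
      _ = Fintype.card V := by simp
  calc ∑ i, I i = ∑ S, w S * ∑ i ∈ S, (m i)⁻¹ * I i := by
        rw [sum_mul_sum_mem_comm]
        exact Finset.sum_congr rfl fun i _ => by
          change I i = (m i)⁻¹ * I i * m i
          field_simp [(hm i).ne']
    _ ≤ ∑ S, w S * √(u S) := Finset.sum_le_sum fun S _ => by
        rcases (hw S).eq_or_lt with h | h
        · simp [← h]
        · exact mul_le_mul_of_nonneg_left (hI S h.ne' _) (hw S)
    _ = ∑ S, √(w S) * √(w S * u S) := Finset.sum_congr rfl fun S _ => by
        rw [Real.sqrt_mul (hw S), ← mul_assoc, Real.mul_self_sqrt (hw S)]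
    _ ≤ √(∑ S, w S) * √(∑ S, w S * u S) :=
        Real.sum_sqrt_mul_sqrt_le _ hw fun S =>
          mul_nonneg (hw S) (Finset.sum_nonneg fun _ _ => sq_nonneg _)
    _ ≤ √(∑ S, w S) * √(Fintype.card V) := by gcongr

lemma exists_fracColoring (G : SimpleGraph V) : ∃ w : Finset V → ℝ, (∀ S, 0 ≤ w S) ∧
    (∀ S, w S ≠ 0 → ∀ i ∈ S, ∀ j ∈ S, ¬G.Adj i j) ∧
    (∀ v, 1 ≤ ∑ S : Finset V, if v ∈ S then w S else 0) := by
  refine ⟨fun S => if S.card = 1 then 1 else 0, fun S => by positivity, fun S hS i hi j hj => ?_,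
    fun v => ?_⟩
  · rw [Finset.card_le_one.1 (ite_ne_right_iff.1 hS).1.le i hi j hj]
    exact G.irrefl
  · simpa using Finset.single_le_sum (f := fun S : Finset V => if v ∈ S then
      (if S.card = 1 then (1 : ℝ) else 0) else 0) (fun S _ => by positivity)
      (Finset.mem_univ {v})

end FractionalCover

lemma le_sqrt_csInf_mul_sqrt {A : Set ℝ} (hA : A.Nonempty) (hA' : BddBelow A) {t m : ℝ}
    (h : ∀ r ∈ A, t ≤ √r * √m) : t ≤ √(sInf A) * √m := by
  have hmono : Monotone fun r => √r * √m := fun r s hrs =>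
    mul_le_mul_of_nonneg_right (Real.sqrt_le_sqrt hrs) (Real.sqrt_nonneg m)
  have hcont : Continuous fun r => √r * √m := by fun_prop
  rw [hmono.map_csInf_of_continuousAt hcont.continuousAt hA hA']
  exact le_csInf (hA.image _) (Set.forall_mem_image.2 h)

end QTF

/-- Every QTF supported on `G` has total influence at most `√(χ_f(G)) · √n`. -/
theorem qtf_influence_le_sqrt_fracChrom {n : ℕ} (G : SimpleGraph (Fin n))
    (f : (Fin n → ℤ) → ℤ) (hf : IsQTFSupportedOn G f) :
    totalInf f ≤ Real.sqrt (fracChromNum G) * Real.sqrt n := by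
  obtain ⟨a, b, c, hsupp, hnz, hsgn⟩ := hf
  unfold fracChromNum
  refine QTF.le_sqrt_csInf_mul_sqrt ?_ ?_ ?_
  · obtain ⟨w, hw, hind, hcov⟩ := QTF.exists_fracColoring G
    exact ⟨_, w, hw, hind, hcov, rfl⟩
  · refine ⟨0, ?_⟩
    rintro _ ⟨w, hw, -, -, rfl⟩
    exact Finset.sum_nonneg fun S _ => hw S
  · rintro _ ⟨w, hw, hind, hcov, rfl⟩
    have hS : ∀ S, w S ≠ 0 → ∀ c : Fin n → ℝ,
        ∑ i ∈ S, c i * coordInf f i ≤ √(∑ i ∈ S, c i ^ 2) := fun S hS =>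
      QTF.sum_mul_coordInf_le_sqrt hnz hsgn S fun i hi j hj hij x _ =>
        QTF.diffSign_quadPoly_flipAt b c hij
          (QTF.coefMatrix_eq_zero_of_not_adj hsupp (hind S hS j hj i hi)) x
    simpa [totalInf] using QTF.sum_le_sqrt_sum_mul_sqrt_card hw hcov hS
end
end

section
/- Let G = (V,E) be a graph on vertex set {1,...,n}. Then every QTF f : {-1,1}^n → {-1,1} supported on G satisfies I[f] ≤ √( n + √(2|E|·n) ). -/
open Finset
open scoped Classical

noncomputable section

namespace QTFAux

set_option linter.unusedSectionVars false

variable {V : Type*} [Fintype V] [DecidableEq V]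

lemma mem_cube_iff {x : V → ℤ} : x ∈ cube V ↔ ∀ i, x i = -1 ∨ x i = 1 := by
  simp [cube, Fintype.mem_piFinset]

lemma cube_nonempty (V : Type*) [Fintype V] [DecidableEq V] : (cube V).Nonempty :=
  ⟨fun _ => 1, mem_cube_iff.2 fun _ => Or.inr rfl⟩

lemma flipAt_apply_self (x : V → ℤ) (i : V) : flipAt x i i = -(x i) := by
  simp [flipAt]

lemma flipAt_apply_ne (x : V → ℤ) {i j : V} (h : j ≠ i) : flipAt x i j = x j := by
  simp [flipAt, Function.update_of_ne h]

lemma flipAt_mem {x : V → ℤ} (hx : x ∈ cube V) (i : V) : flipAt x i ∈ cube V := by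
  rw [mem_cube_iff] at hx ⊢
  intro j
  rcases eq_or_ne j i with rfl | h
  · rw [flipAt_apply_self]; rcases hx j with h | h <;> simp [h]
  · rw [flipAt_apply_ne _ h]; exact hx j

lemma flipAt_flipAt (x : V → ℤ) (i : V) : flipAt (flipAt x i) i = x := by
  funext j
  rcases eq_or_ne j i with rfl | h
  · rw [flipAt_apply_self, flipAt_apply_self, neg_neg]
  · rw [flipAt_apply_ne _ h, flipAt_apply_ne _ h]

lemma flipAt_comm (x : V → ℤ) {i j : V} (h : i ≠ j) :
    flipAt (flipAt x i) j = flipAt (flipAt x j) i := by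
  funext k
  rcases eq_or_ne k i with rfl | hki
  · rw [flipAt_apply_ne _ h, flipAt_apply_self, flipAt_apply_self,
      flipAt_apply_ne _ h]
  · rcases eq_or_ne k j with rfl | hkj
    · rw [flipAt_apply_self, flipAt_apply_ne _ hki, flipAt_apply_ne _ hki,
        flipAt_apply_self]
    · rw [flipAt_apply_ne _ hkj, flipAt_apply_ne _ hki, flipAt_apply_ne _ hki,
        flipAt_apply_ne _ hkj]

lemma sum_cube_flip (g : (V → ℤ) → ℝ) (i : V) :
    ∑ x ∈ cube V, g (flipAt x i) = ∑ x ∈ cube V, g x := by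
  apply Finset.sum_nbij' (fun x => flipAt x i) (fun x => flipAt x i) <;>
    intro x hx <;> simp [flipAt_mem hx, flipAt_flipAt]

lemma sum_cube_eq_zero {g : (V → ℤ) → ℝ} (i : V)
    (h : ∀ x ∈ cube V, g (flipAt x i) = -g x) : ∑ x ∈ cube V, g x = 0 := by
  have h1 : ∑ x ∈ cube V, g x = ∑ x ∈ cube V, g (flipAt x i) := (sum_cube_flip g i).symm
  rw [Finset.sum_congr rfl h, Finset.sum_neg_distrib] at h1
  linarith

lemma coord_cast {x : V → ℤ} (hx : x ∈ cube V) (j : V) :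
    ((x j : ℤ) : ℝ) = 1 ∨ ((x j : ℤ) : ℝ) = -1 := by
  rcases mem_cube_iff.1 hx j with h | h <;> simp [h]

lemma coord_sq {x : V → ℤ} (hx : x ∈ cube V) (j : V) :
    ((x j : ℤ) : ℝ) ^ 2 = 1 := by
  rcases coord_cast hx j with h | h <;> rw [h] <;> norm_num

lemma sgn_pm {t : ℝ} (h : t ≠ 0) : sgn t = 1 ∨ sgn t = -1 := by
  rcases h.lt_or_gt with h1 | h1 <;> simp [sgn, h1, asymm h1]

lemma sgn_mul_self {t : ℝ} (h : t ≠ 0) : (sgn t : ℝ) * t = |t| := by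
  rcases h.lt_or_gt with h1 | h1 <;>
    simp [sgn, h1, asymm h1, abs_of_neg, abs_of_pos]

lemma sgn_abs_le (t : ℝ) : |(sgn t : ℝ)| ≤ 1 := by
  unfold sgn; split_ifs <;> norm_num

lemma sgn_sq_le_one (t : ℝ) : ((sgn t : ℝ)) ^ 2 ≤ 1 := by
  unfold sgn; split_ifs <;> norm_num

lemma sgn_mono {s t : ℝ} (h : s ≤ t) : sgn s ≤ sgn t := by
  unfold sgn; split_ifs <;> first | linarith | (exfalso; linarith)

lemma lt_of_sgn_lt {s t : ℝ} (h : sgn s < sgn t) : s < t := by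
  by_contra hc
  exact absurd (sgn_mono (not_lt.1 hc)) (not_le.2 h)

lemma sgn_mul_pos {A t : ℝ} (ht : t = 1 ∨ t = -1) (h : 0 < A * t) :
    (sgn A : ℝ) * t = 1 := by
  rcases ht with rfl | rfl
  · rw [mul_one] at h ⊢; simp [sgn, h]
  · rw [mul_neg_one] at h
    have : A < 0 := by linarith
    simp [sgn, this, asymm this]

lemma sgn_mul_pos' {A t : ℝ} (ht : t = 1 ∨ t = -1) (h : 0 < t * A) :
    t * (sgn A : ℝ) = 1 := by
  rw [mul_comm] at h ⊢; exact sgn_mul_pos ht h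

end QTFAux
namespace QTFAux

section LinQuad

variable {V : Type*} [Fintype V] [LinearOrder V] [DecidableEq V]

def Asym (a : V → V → ℝ) (i j : V) : ℝ :=
  if i < j then a i j else if j < i then a j i else 0

lemma Asym_self (a : V → V → ℝ) (i : V) : Asym a i i = 0 := by simp [Asym]

lemma Asym_symm (a : V → V → ℝ) (i j : V) : Asym a i j = Asym a j i := by
  unfold Asym
  rcases lt_trichotomy i j with h | h | h
  · simp [h, asymm h]
  · simp [h]
  · simp [h, asymm h]

def lin (a : V → V → ℝ) (b : V → ℝ) (i : V) (x : V → ℤ) : ℝ :=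
  b i + ∑ j, Asym a i j * (x j : ℝ)

lemma flip_cast (x : V → ℤ) (i k : V) :
    ((flipAt x i k : ℤ) : ℝ) = if k = i then -((x i : ℤ) : ℝ) else ((x k : ℤ) : ℝ) := by
  rcases eq_or_ne k i with rfl | h
  · rw [flipAt_apply_self]; simp
  · rw [flipAt_apply_ne _ h, if_neg h]

lemma lin_flip (a : V → V → ℝ) (b : V → ℝ) (i j : V) (x : V → ℤ) :
    lin a b i (flipAt x j) = lin a b i x - 2 * Asym a i j * ((x j : ℤ) : ℝ) := by
  unfold lin
  have key : ∀ k : V, Asym a i k * ((flipAt x j k : ℤ) : ℝ)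
      = Asym a i k * ((x k : ℤ) : ℝ) - (if k = j then 2 * Asym a i j * ((x j : ℤ) : ℝ) else 0) := by
    intro k
    rw [flip_cast]
    by_cases h : k = j
    · rw [if_pos h, if_pos h, h]; ring
    · rw [if_neg h, if_neg h]; ring
  rw [Finset.sum_congr rfl fun k _ => key k, Finset.sum_sub_distrib,
    Finset.sum_ite_eq' Finset.univ j
      (fun _ => 2 * Asym a i j * ((x j : ℤ) : ℝ))]
  simp only [Finset.mem_univ, if_pos]
  ring

lemma quad_flip (a : V → V → ℝ) (b : V → ℝ) (c : ℝ) (x : V → ℤ) (i : V) :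
    quadPoly a b c (flipAt x i)
      = quadPoly a b c x - 2 * ((x i : ℤ) : ℝ) * lin a b i x := by
  unfold quadPoly
  have hL : ∑ k : V, b k * ((flipAt x i k : ℤ) : ℝ)
      = (∑ k : V, b k * ((x k : ℤ) : ℝ)) - 2 * b i * ((x i : ℤ) : ℝ) := by
    have key : ∀ k : V, b k * ((flipAt x i k : ℤ) : ℝ)
        = b k * ((x k : ℤ) : ℝ) - (if k = i then 2 * b i * ((x i : ℤ) : ℝ) else 0) := by
      intro k
      rw [flip_cast]
      by_cases h : k = i
      · rw [if_pos h, if_pos h, h]; ring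
      · rw [if_neg h, if_neg h]; ring
    rw [Finset.sum_congr rfl fun k _ => key k, Finset.sum_sub_distrib,
      Finset.sum_ite_eq' Finset.univ i (fun _ => 2 * b i * ((x i : ℤ) : ℝ))]
    simp only [Finset.mem_univ, if_pos]
  have hQ : (∑ k : V, ∑ l : V,
        if k < l then a k l * ((flipAt x i k : ℤ) : ℝ) * ((flipAt x i l : ℤ) : ℝ) else 0)
      = (∑ k : V, ∑ l : V, if k < l then a k l * ((x k : ℤ) : ℝ) * ((x l : ℤ) : ℝ) else 0)
        - 2 * ((x i : ℤ) : ℝ) * (∑ j : V, Asym a i j * ((x j : ℤ) : ℝ)) := by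
    have key : ∀ k l : V,
        (if k < l then a k l * ((flipAt x i k : ℤ) : ℝ) * ((flipAt x i l : ℤ) : ℝ) else 0)
        = (if k < l then a k l * ((x k : ℤ) : ℝ) * ((x l : ℤ) : ℝ) else 0)
          + ((if k = i then (if i < l then -2 * ((x i : ℤ) : ℝ) * (a i l * ((x l : ℤ) : ℝ)) else 0) else 0)
            + (if l = i then (if k < i then -2 * ((x i : ℤ) : ℝ) * (a k i * ((x k : ℤ) : ℝ)) else 0) else 0)) := by
      intro k l
      rw [flip_cast, flip_cast]
      by_cases hk : k = i <;> by_cases hl : l = i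
      · have hnl : ¬ k < l := by rw [hk, hl]; exact lt_irrefl i
        simp [hk, hl, hnl]
      · rw [if_pos hk, if_neg hl, if_pos hk, hk]
        split_ifs <;> ring
      · rw [if_neg hk, if_pos hl, if_neg hk, if_pos hl, hl]
        split_ifs <;> ring
      · rw [if_neg hk, if_neg hl, if_neg hk, if_neg hl]
        split_ifs <;> ring
    rw [Finset.sum_congr rfl fun k _ => Finset.sum_congr rfl fun l _ => key k l]
    simp only [Finset.sum_add_distrib]
    have e1 : (∑ k : V, ∑ l : V, if k = i then (if i < l then -2 * ((x i : ℤ) : ℝ) * (a i l * ((x l : ℤ) : ℝ)) else 0) else 0)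
        = ∑ l : V, (if i < l then -2 * ((x i : ℤ) : ℝ) * (a i l * ((x l : ℤ) : ℝ)) else 0) := by
      rw [Finset.sum_congr rfl (fun k _ => ?_), Finset.sum_ite_eq' Finset.univ i
        (fun _ => ∑ l : V, (if i < l then -2 * ((x i : ℤ) : ℝ) * (a i l * ((x l : ℤ) : ℝ)) else 0))]
      · simp only [Finset.mem_univ, if_pos]
      · split_ifs with h
        · rfl
        · exact Finset.sum_const_zero
    have e2 : (∑ k : V, ∑ l : V, if l = i then (if k < i then -2 * ((x i : ℤ) : ℝ) * (a k i * ((x k : ℤ) : ℝ)) else 0) else 0)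
        = ∑ k : V, (if k < i then -2 * ((x i : ℤ) : ℝ) * (a k i * ((x k : ℤ) : ℝ)) else 0) := by
      refine Finset.sum_congr rfl fun k _ => ?_
      exact Finset.sum_ite_eq' Finset.univ i
        (fun _ => if k < i then -2 * ((x i : ℤ) : ℝ) * (a k i * ((x k : ℤ) : ℝ)) else 0)
        |>.trans (by simp)
    rw [e1, e2]
    have e3 : (∑ l : V, (if i < l then -2 * ((x i : ℤ) : ℝ) * (a i l * ((x l : ℤ) : ℝ)) else 0))
        + (∑ k : V, (if k < i then -2 * ((x i : ℤ) : ℝ) * (a k i * ((x k : ℤ) : ℝ)) else 0))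
        = ∑ j : V, -2 * ((x i : ℤ) : ℝ) * (Asym a i j * ((x j : ℤ) : ℝ)) := by
      rw [← Finset.sum_add_distrib]
      refine Finset.sum_congr rfl fun j _ => ?_
      rcases lt_trichotomy i j with h | h | h
      · simp [Asym, h, asymm h]
      · simp [h, Asym, lt_irrefl]
      · simp [Asym, h, asymm h]
    rw [e3, ← Finset.mul_sum]
    ring
  rw [hQ, hL]
  unfold lin
  ring

end LinQuad

end QTFAux
namespace QTFAux

section SgPart

variable {V : Type*} [Fintype V] [LinearOrder V] [DecidableEq V]

def sg (a : V → V → ℝ) (b : V → ℝ) (i : V) (x : V → ℤ) : ℝ :=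
  ((sgn (lin a b i x) : ℤ) : ℝ)

def uu (a : V → V → ℝ) (b : V → ℝ) (i : V) (x : V → ℤ) : ℝ :=
  ((x i : ℤ) : ℝ) * sg a b i x

def dd (a : V → V → ℝ) (b : V → ℝ) (i j : V) (x : V → ℤ) : ℝ :=
  (sg a b i x - sg a b i (flipAt x j)) * ((x j : ℤ) : ℝ) / 2

def mm (a : V → V → ℝ) (b : V → ℝ) (i j : V) (x : V → ℤ) : ℝ :=
  (sg a b i x + sg a b i (flipAt x j)) / 2

variable (a : V → V → ℝ) (b : V → ℝ)

lemma sg_flip_self (i : V) (x : V → ℤ) : sg a b i (flipAt x i) = sg a b i x := by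
  unfold sg
  rw [lin_flip, Asym_self]
  norm_num

lemma mm_flip₁ (i j : V) (x : V → ℤ) : mm a b i j (flipAt x j) = mm a b i j x := by
  unfold mm
  rw [flipAt_flipAt]
  ring

lemma dd_flip₁ (i j : V) (x : V → ℤ) : dd a b i j (flipAt x j) = dd a b i j x := by
  unfold dd
  rw [flipAt_flipAt, flipAt_apply_self]
  push_cast
  ring

lemma mm_flip₂ {i j : V} (h : i ≠ j) (x : V → ℤ) :
    mm a b i j (flipAt x i) = mm a b i j x := by
  unfold mm
  rw [sg_flip_self, flipAt_comm x h, sg_flip_self]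

lemma dd_flip₂ {i j : V} (h : i ≠ j) (x : V → ℤ) :
    dd a b i j (flipAt x i) = dd a b i j x := by
  unfold dd
  rw [sg_flip_self, flipAt_comm x h, sg_flip_self, flipAt_apply_ne _ (Ne.symm h)]

lemma uu_mul_eq (i j : V) (x : V → ℤ) :
    uu a b i x * uu a b j x
      = ((x i : ℤ) : ℝ) * ((x j : ℤ) : ℝ) * mm a b i j x * mm a b j i x
        + ((x j : ℤ) : ℝ) * mm a b i j x * dd a b j i x
        + ((x i : ℤ) : ℝ) * dd a b i j x * mm a b j i x
        + dd a b i j x * dd a b j i x := by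
  unfold uu mm dd
  ring

lemma sum_uu_mul {i j : V} (h : i ≠ j) :
    ∑ x ∈ cube V, uu a b i x * uu a b j x
      = ∑ x ∈ cube V, dd a b i j x * dd a b j i x := by
  have h1 : ∑ x ∈ cube V, ((x i : ℤ) : ℝ) * ((x j : ℤ) : ℝ) * mm a b i j x * mm a b j i x = 0 := by
    apply sum_cube_eq_zero i
    intro x hx
    rw [mm_flip₂ a b h, mm_flip₁, flip_cast, flip_cast]
    rw [if_pos rfl, if_neg (Ne.symm h)]
    ring
  have h2 : ∑ x ∈ cube V, ((x j : ℤ) : ℝ) * mm a b i j x * dd a b j i x = 0 := by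
    apply sum_cube_eq_zero j
    intro x hx
    rw [mm_flip₁, dd_flip₂ a b (Ne.symm h), flip_cast, if_pos rfl]
    ring
  have h3 : ∑ x ∈ cube V, ((x i : ℤ) : ℝ) * dd a b i j x * mm a b j i x = 0 := by
    apply sum_cube_eq_zero i
    intro x hx
    rw [dd_flip₂ a b h, mm_flip₁, flip_cast, if_pos rfl]
    ring
  calc ∑ x ∈ cube V, uu a b i x * uu a b j x
      = ∑ x ∈ cube V, (((x i : ℤ) : ℝ) * ((x j : ℤ) : ℝ) * mm a b i j x * mm a b j i x
        + ((x j : ℤ) : ℝ) * mm a b i j x * dd a b j i x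
        + ((x i : ℤ) : ℝ) * dd a b i j x * mm a b j i x
        + dd a b i j x * dd a b j i x) :=
        Finset.sum_congr rfl fun x _ => uu_mul_eq a b i j x
    _ = ∑ x ∈ cube V, dd a b i j x * dd a b j i x := by
        simp only [Finset.sum_add_distrib, h1, h2, h3, zero_add]

end SgPart

end QTFAux
namespace QTFAux

section DDPart

variable {V : Type*} [Fintype V] [LinearOrder V] [DecidableEq V] (a : V → V → ℝ) (b : V → ℝ)

lemma dd_zero {i j : V} (h : Asym a i j = 0) (x : V → ℤ) : dd a b i j x = 0 := by
  unfold dd sg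
  rw [lin_flip, h]
  norm_num

lemma dd_abs_le {i j : V} {x : V → ℤ} (hx : x ∈ cube V) : |dd a b i j x| ≤ 1 := by
  have h1 : |sg a b i x - sg a b i (flipAt x j)| ≤ 2 := by
    have e1 : |sg a b i x| ≤ 1 := by unfold sg; exact sgn_abs_le _
    have e2 : |sg a b i (flipAt x j)| ≤ 1 := by unfold sg; exact sgn_abs_le _
    have e3 := abs_add_le (sg a b i x) (-(sg a b i (flipAt x j)))
    rw [abs_neg] at e3
    rw [sub_eq_add_neg]
    linarith
  have h2 : |((x j : ℤ) : ℝ)| = 1 := by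
    rcases coord_cast hx j with h | h <;> rw [h] <;> norm_num
  unfold dd
  rw [abs_div, abs_mul, h2, mul_one, abs_of_pos (by norm_num : (0:ℝ) < 2)]
  linarith

lemma dd_sq_le {i j : V} {x : V → ℤ} (hx : x ∈ cube V) (hA : Asym a i j ≠ 0) :
    dd a b i j x ^ 2 ≤ dd a b i j x * ((sgn (Asym a i j) : ℤ) : ℝ) := by
  have key : |dd a b i j x| = dd a b i j x * ((sgn (Asym a i j) : ℤ) : ℝ) := by
    have hxj := coord_cast hx j
    have hlf := lin_flip a b i j x
    rcases lt_trichotomy (sgn (lin a b i x)) (sgn (lin a b i (flipAt x j))) with hcmp | hcmp | hcmp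
    · -- lin x < lin flip , so 0 < -2 A x_j, A * x_j < 0
      have hlt : lin a b i x < lin a b i (flipAt x j) := lt_of_sgn_lt hcmp
      have hAx : Asym a i j * ((x j : ℤ) : ℝ) < 0 := by rw [hlf] at hlt; linarith
      have hs : ((sgn (Asym a i j) : ℤ) : ℝ) * ((x j : ℤ) : ℝ) = -1 := by
        have h' : 0 < Asym a i j * (-((x j : ℤ) : ℝ)) := by linarith
        have := sgn_mul_pos (A := Asym a i j) (t := -((x j : ℤ) : ℝ))
          (by rcases hxj with h | h <;> rw [h] <;> norm_num) h'
        linarith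
      have hcast : sg a b i x < sg a b i (flipAt x j) := by
        unfold sg; exact_mod_cast hcmp
      have h2 : |((x j : ℤ) : ℝ)| = 1 := by rcases hxj with h | h <;> rw [h] <;> norm_num
      have hxx : ((x j : ℤ) : ℝ) * ((x j : ℤ) : ℝ) = 1 := by
        rcases hxj with h | h <;> rw [h] <;> norm_num
      unfold dd
      rw [abs_div, abs_mul, h2, mul_one, abs_of_neg (by linarith : sg a b i x - sg a b i (flipAt x j) < 0),
        abs_of_pos (by norm_num : (0:ℝ) < 2)]
      linear_combination (-(sg a b i x - sg a b i (flipAt x j)) / 2) * hs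
    · unfold dd sg
      rw [hcmp]
      simp
    · have hlt : lin a b i (flipAt x j) < lin a b i x := lt_of_sgn_lt hcmp
      have hAx : 0 < Asym a i j * ((x j : ℤ) : ℝ) := by rw [hlf] at hlt; linarith
      have hs : ((sgn (Asym a i j) : ℤ) : ℝ) * ((x j : ℤ) : ℝ) = 1 := by
        exact_mod_cast sgn_mul_pos (A := Asym a i j) (t := ((x j : ℤ) : ℝ))
          (by rcases hxj with h | h <;> rw [h] <;> norm_num) (by linarith)
      have hcast : sg a b i (flipAt x j) < sg a b i x := by
        unfold sg; exact_mod_cast hcmp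
      have h2 : |((x j : ℤ) : ℝ)| = 1 := by rcases hxj with h | h <;> rw [h] <;> norm_num
      unfold dd
      rw [abs_div, abs_mul, h2, mul_one,
        abs_of_pos (by linarith : (0:ℝ) < sg a b i x - sg a b i (flipAt x j)),
        abs_of_pos (by norm_num : (0:ℝ) < 2)]
      linear_combination (-(sg a b i x - sg a b i (flipAt x j)) / 2) * hs
  calc dd a b i j x ^ 2 = |dd a b i j x| ^ 2 := (sq_abs _).symm
    _ ≤ |dd a b i j x| := by
        have h0 := abs_nonneg (dd a b i j x)
        have h1 := dd_abs_le a b (i := i) (j := j) hx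
        nlinarith
    _ = dd a b i j x * ((sgn (Asym a i j) : ℤ) : ℝ) := key

lemma sum_dd (i j : V) :
    ∑ x ∈ cube V, dd a b i j x = ∑ x ∈ cube V, sg a b i x * ((x j : ℤ) : ℝ) := by
  have hflip : ∑ x ∈ cube V, sg a b i (flipAt x j) * ((x j : ℤ) : ℝ)
      = - ∑ x ∈ cube V, sg a b i x * ((x j : ℤ) : ℝ) := by
    have := sum_cube_flip (fun x => sg a b i x * ((x j : ℤ) : ℝ)) j
    rw [← this, ← Finset.sum_neg_distrib]
    refine Finset.sum_congr rfl fun x hx => ?_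
    rw [flip_cast, if_pos rfl]
    ring
  have : ∀ x, dd a b i j x = sg a b i x * ((x j : ℤ) : ℝ) / 2
      - sg a b i (flipAt x j) * ((x j : ℤ) : ℝ) / 2 := by
    intro x; unfold dd; ring
  rw [Finset.sum_congr rfl fun x _ => this x, Finset.sum_sub_distrib]
  rw [← Finset.sum_div, ← Finset.sum_div, hflip]
  ring

lemma sum_sq_linear (w : V → ℝ) (S : Finset V) :
    ∑ x ∈ cube V, (∑ j ∈ S, w j * ((x j : ℤ) : ℝ)) ^ 2
      = ((cube V).card : ℝ) * ∑ j ∈ S, w j ^ 2 := by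
  have expand : ∀ x : V → ℤ, (∑ j ∈ S, w j * ((x j : ℤ) : ℝ)) ^ 2
      = ∑ j ∈ S, ∑ k ∈ S, (w j * ((x j : ℤ) : ℝ)) * (w k * ((x k : ℤ) : ℝ)) := by
    intro x; rw [sq, Finset.sum_mul_sum]
  rw [Finset.sum_congr rfl fun x _ => expand x, Finset.sum_comm]
  have inner : ∀ j ∈ S, ∑ x ∈ cube V, ∑ k ∈ S, (w j * ((x j : ℤ) : ℝ)) * (w k * ((x k : ℤ) : ℝ))
      = ((cube V).card : ℝ) * w j ^ 2 := by
    intro j hj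
    rw [Finset.sum_comm]
    rw [Finset.sum_eq_single_of_mem j hj]
    · have : ∀ x ∈ cube V, (w j * ((x j : ℤ) : ℝ)) * (w j * ((x j : ℤ) : ℝ)) = w j ^ 2 := by
        intro x hx
        have := coord_sq hx j
        nlinarith [coord_sq hx j]
      rw [Finset.sum_congr rfl this, Finset.sum_const, nsmul_eq_mul]
    · intro k _ hkj
      apply sum_cube_eq_zero k
      intro x hx
      rw [flip_cast, flip_cast, if_pos rfl, if_neg (Ne.symm hkj)]
      ring
  rw [Finset.sum_congr rfl inner, ← Finset.mul_sum]

lemma sum_le_sqrt_mul {α : Type*} (s : Finset α) (f g : α → ℝ) :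
    ∑ i ∈ s, f i * g i ≤ Real.sqrt (∑ i ∈ s, f i ^ 2) * Real.sqrt (∑ i ∈ s, g i ^ 2) := by
  have h := Finset.sum_mul_sq_le_sq_mul_sq s f g
  calc ∑ i ∈ s, f i * g i ≤ |∑ i ∈ s, f i * g i| := le_abs_self _
    _ = Real.sqrt ((∑ i ∈ s, f i * g i) ^ 2) := (Real.sqrt_sq_eq_abs _).symm
    _ ≤ Real.sqrt ((∑ i ∈ s, f i ^ 2) * ∑ i ∈ s, g i ^ 2) := Real.sqrt_le_sqrt h
    _ = _ := Real.sqrt_mul (by positivity) _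

end DDPart

end QTFAux
namespace QTFAux

section Steps

variable {V : Type*} [Fintype V] [LinearOrder V] [DecidableEq V] (a : V → V → ℝ) (b : V → ℝ) (c : ℝ)

lemma pm_cast {f : (V → ℤ) → ℤ} {x : V → ℤ}
    (hfx : f x = sgn (quadPoly a b c x)) (hqx : quadPoly a b c x ≠ 0) :
    ((f x : ℤ) : ℝ) = 1 ∨ ((f x : ℤ) : ℝ) = -1 := by
  rcases sgn_pm hqx with h | h <;> rw [hfx, h] <;> norm_num

lemma step1 (f : (V → ℤ) → ℤ)
    (hnz : ∀ x ∈ cube V, quadPoly a b c x ≠ 0)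
    (hfeq : ∀ x ∈ cube V, f x = sgn (quadPoly a b c x)) (i : V) :
    (∑ x ∈ cube V, if f x ≠ f (flipAt x i) then (1 : ℝ) else 0)
      ≤ ∑ x ∈ cube V, ((f x : ℤ) : ℝ) * uu a b i x := by
  have key : ∀ x ∈ cube V, 2 * (if f x ≠ f (flipAt x i) then (1 : ℝ) else 0)
      ≤ ((f x : ℤ) : ℝ) * uu a b i x
        + ((f (flipAt x i) : ℤ) : ℝ) * uu a b i (flipAt x i) := by
    intro x hx
    have hy : flipAt x i ∈ cube V := flipAt_mem hx i
    have hfx := hfeq x hx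
    have hfy := hfeq _ hy
    have hqx := hnz x hx
    have hqy := hnz _ hy
    have hq := quad_flip a b c x i
    have huu : uu a b i (flipAt x i) = -(((x i : ℤ) : ℝ)) * sg a b i x := by
      unfold uu
      rw [sg_flip_self, flip_cast, if_pos rfl]
    by_cases hne : f x = f (flipAt x i)
    · rw [if_neg (by simpa using hne), huu, hne]
      exact le_of_eq (by unfold uu; ring)
    · rw [if_pos hne, huu]
      have hfy0 : f (flipAt x i) = - f x := by
        have p1 := sgn_pm hqx
        have p2 := sgn_pm hqy
        rw [← hfx] at p1
        rw [← hfy] at p2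
        omega
      have hfy' : ((f (flipAt x i) : ℤ) : ℝ) = -((f x : ℤ) : ℝ) := by
        rw [hfy0]; push_cast; ring
      have e1 : ((f x : ℤ) : ℝ) * quadPoly a b c x = |quadPoly a b c x| := by
        rw [hfx]; exact_mod_cast sgn_mul_self hqx
      have e2 : ((f (flipAt x i) : ℤ) : ℝ) * quadPoly a b c (flipAt x i)
          = |quadPoly a b c (flipAt x i)| := by
        rw [hfy]; exact_mod_cast sgn_mul_self hqy
      have habs1 : 0 < |quadPoly a b c x| := abs_pos.2 hqx
      have habs2 : 0 < |quadPoly a b c (flipAt x i)| := abs_pos.2 hqy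
      have hpos : 0 < (((f x : ℤ) : ℝ) * ((x i : ℤ) : ℝ)) * lin a b i x := by
        have : ((f x : ℤ) : ℝ) * quadPoly a b c (flipAt x i)
            = |quadPoly a b c x| - 2 * ((f x : ℤ) : ℝ) * ((x i : ℤ) : ℝ) * lin a b i x := by
          rw [hq]; rw [← e1]; ring
        rw [hfy'] at e2
        nlinarith
      have hpm : ((f x : ℤ) : ℝ) * ((x i : ℤ) : ℝ) = 1
          ∨ ((f x : ℤ) : ℝ) * ((x i : ℤ) : ℝ) = -1 := by
        rcases pm_cast a b c hfx hqx with h1 | h1 <;> rcases coord_cast hx i with h2 | h2 <;>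
          rw [h1, h2] <;> norm_num
      have hone : (((f x : ℤ) : ℝ) * ((x i : ℤ) : ℝ)) * sg a b i x = 1 := by
        unfold sg
        exact sgn_mul_pos' hpm (by rw [mul_comm] at hpos; linarith [hpos])
      rw [hfy']
      unfold uu
      nlinarith [hone]
  have hsum : ∑ x ∈ cube V, ((f (flipAt x i) : ℤ) : ℝ) * uu a b i (flipAt x i)
      = ∑ x ∈ cube V, ((f x : ℤ) : ℝ) * uu a b i x :=
    sum_cube_flip (fun x => ((f x : ℤ) : ℝ) * uu a b i x) i
  have h2 : ∑ x ∈ cube V, 2 * (if f x ≠ f (flipAt x i) then (1 : ℝ) else 0)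
      ≤ ∑ x ∈ cube V, (((f x : ℤ) : ℝ) * uu a b i x
        + ((f (flipAt x i) : ℤ) : ℝ) * uu a b i (flipAt x i)) :=
    Finset.sum_le_sum key
  rw [Finset.sum_add_distrib, hsum, ← Finset.mul_sum] at h2
  linarith

lemma step4 (i : V) :
    ∑ j ∈ Finset.univ.erase i, ∑ x ∈ cube V, dd a b i j x ^ 2
      ≤ ((cube V).card : ℝ)
        * Real.sqrt ((Finset.univ.filter (fun j => Asym a i j ≠ 0)).card) := by
  classical
  set S := Finset.univ.filter (fun j => Asym a i j ≠ 0) with hS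
  set N : ℝ := ((cube V).card : ℝ) with hNdef
  have hNnn : (0:ℝ) ≤ N := by positivity
  have hsub : S ⊆ Finset.univ.erase i := by
    intro j hj
    rw [Finset.mem_filter] at hj
    rw [Finset.mem_erase]
    refine ⟨fun hji => hj.2 (hji ▸ Asym_self a i), Finset.mem_univ j⟩
  have hzero : ∀ j ∈ Finset.univ.erase i, j ∉ S → (∑ x ∈ cube V, dd a b i j x ^ 2) = 0 := by
    intro j _ hj
    have hA : Asym a i j = 0 := by
      by_contra h
      exact hj (Finset.mem_filter.2 ⟨Finset.mem_univ j, h⟩)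
    refine Finset.sum_eq_zero fun x _ => by rw [dd_zero a b hA]; norm_num
  rw [← Finset.sum_subset hsub hzero]
  have hbound : ∑ j ∈ S, ∑ x ∈ cube V, dd a b i j x ^ 2
      ≤ ∑ x ∈ cube V, sg a b i x * (∑ j ∈ S, ((sgn (Asym a i j) : ℤ) : ℝ) * ((x j : ℤ) : ℝ)) := by
    have h1 : ∀ j ∈ S, ∑ x ∈ cube V, dd a b i j x ^ 2
        ≤ ∑ x ∈ cube V, sg a b i x * (((sgn (Asym a i j) : ℤ) : ℝ) * ((x j : ℤ) : ℝ)) := by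
      intro j hj
      have hA : Asym a i j ≠ 0 := (Finset.mem_filter.1 hj).2
      calc ∑ x ∈ cube V, dd a b i j x ^ 2
          ≤ ∑ x ∈ cube V, dd a b i j x * ((sgn (Asym a i j) : ℤ) : ℝ) :=
            Finset.sum_le_sum fun x hx => dd_sq_le a b hx hA
        _ = (∑ x ∈ cube V, dd a b i j x) * ((sgn (Asym a i j) : ℤ) : ℝ) := by
            rw [Finset.sum_mul]
        _ = (∑ x ∈ cube V, sg a b i x * ((x j : ℤ) : ℝ)) * ((sgn (Asym a i j) : ℤ) : ℝ) := by
            rw [sum_dd]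
        _ = ∑ x ∈ cube V, sg a b i x * (((sgn (Asym a i j) : ℤ) : ℝ) * ((x j : ℤ) : ℝ)) := by
            rw [Finset.sum_mul]
            exact Finset.sum_congr rfl fun x _ => by ring
    calc ∑ j ∈ S, ∑ x ∈ cube V, dd a b i j x ^ 2
        ≤ ∑ j ∈ S, ∑ x ∈ cube V, sg a b i x * (((sgn (Asym a i j) : ℤ) : ℝ) * ((x j : ℤ) : ℝ)) :=
          Finset.sum_le_sum h1
      _ = ∑ x ∈ cube V, ∑ j ∈ S, sg a b i x * (((sgn (Asym a i j) : ℤ) : ℝ) * ((x j : ℤ) : ℝ)) :=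
          Finset.sum_comm
      _ = ∑ x ∈ cube V, sg a b i x * (∑ j ∈ S, ((sgn (Asym a i j) : ℤ) : ℝ) * ((x j : ℤ) : ℝ)) := by
          exact Finset.sum_congr rfl fun x _ => (Finset.mul_sum _ _ _).symm
  have hsg2 : ∑ x ∈ cube V, sg a b i x ^ 2 ≤ N := by
    calc ∑ x ∈ cube V, sg a b i x ^ 2 ≤ ∑ _x ∈ cube V, (1:ℝ) :=
          Finset.sum_le_sum fun x _ => by unfold sg; exact sgn_sq_le_one _
      _ = N := by rw [Finset.sum_const, nsmul_eq_mul, mul_one]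
  have hlin2 : ∑ x ∈ cube V, (∑ j ∈ S, ((sgn (Asym a i j) : ℤ) : ℝ) * ((x j : ℤ) : ℝ)) ^ 2
      = N * S.card := by
    rw [sum_sq_linear]
    congr 1
    rw [Finset.sum_congr rfl (g := fun _ => (1:ℝ)) fun j hj => ?_]
    · rw [Finset.sum_const, nsmul_eq_mul, mul_one]
    · have hA : Asym a i j ≠ 0 := (Finset.mem_filter.1 hj).2
      rcases sgn_pm hA with h | h <;> rw [h] <;> norm_num
  calc ∑ j ∈ S, ∑ x ∈ cube V, dd a b i j x ^ 2
      ≤ ∑ x ∈ cube V, sg a b i x * (∑ j ∈ S, ((sgn (Asym a i j) : ℤ) : ℝ) * ((x j : ℤ) : ℝ)) :=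
        hbound
    _ ≤ Real.sqrt (∑ x ∈ cube V, sg a b i x ^ 2)
        * Real.sqrt (∑ x ∈ cube V, (∑ j ∈ S, ((sgn (Asym a i j) : ℤ) : ℝ) * ((x j : ℤ) : ℝ)) ^ 2) :=
        sum_le_sqrt_mul _ _ _
    _ ≤ Real.sqrt N * Real.sqrt (N * S.card) := by
        apply mul_le_mul (Real.sqrt_le_sqrt hsg2) (le_of_eq (by rw [hlin2]))
          (Real.sqrt_nonneg _) (Real.sqrt_nonneg _)
    _ = N * Real.sqrt S.card := by
        rw [Real.sqrt_mul hNnn, ← mul_assoc, Real.mul_self_sqrt hNnn]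

end Steps

end QTFAux
lemma degsum_le {n : ℕ} (G : SimpleGraph (Fin n)) [DecidableRel G.Adj] :
    ∑ i : Fin n, Real.sqrt (G.degree i)
      ≤ Real.sqrt (2 * (G.edgeFinset.card : ℝ) * (n : ℝ)) := by
  have h2 : ∑ i : Fin n, Real.sqrt (G.degree i) ^ 2 = ∑ i : Fin n, (G.degree i : ℝ) :=
    Finset.sum_congr rfl fun i _ => Real.sq_sqrt (by positivity)
  have h := sq_sum_le_card_mul_sum_sq (s := (Finset.univ : Finset (Fin n)))
    (f := fun i => Real.sqrt (G.degree i))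
  rw [h2] at h
  have hdeg2 : ∑ i : Fin n, (G.degree i : ℝ) = 2 * (G.edgeFinset.card : ℝ) := by
    exact_mod_cast congrArg (fun m : ℕ => (m : ℝ)) G.sum_degrees_eq_twice_card_edges
  have h3 : (∑ i : Fin n, Real.sqrt (G.degree i)) ^ 2 ≤ 2 * (G.edgeFinset.card : ℝ) * n := by
    calc (∑ i : Fin n, Real.sqrt (G.degree i)) ^ 2
        ≤ (Finset.univ.card : ℝ) * ∑ i : Fin n, (G.degree i : ℝ) := h
      _ = 2 * (G.edgeFinset.card : ℝ) * n := by
          rw [hdeg2, Finset.card_univ, Fintype.card_fin]; ring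
  have h4 : 0 ≤ ∑ i : Fin n, Real.sqrt (G.degree i) := by positivity
  calc ∑ i : Fin n, Real.sqrt (G.degree i)
      = Real.sqrt ((∑ i : Fin n, Real.sqrt (G.degree i)) ^ 2) := (Real.sqrt_sq h4).symm
    _ ≤ _ := Real.sqrt_le_sqrt h3

set_option maxHeartbeats 1000000 in
open QTFAux in
/-- Every QTF supported on a graph `G = (V,E)` on `n` vertices satisfies
`I[f] ≤ √(n + √(2|E|n))`. -/
theorem qtf_influence_le_sqrt_edges {n : ℕ} (G : SimpleGraph (Fin n)) [DecidableRel G.Adj]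
    (f : (Fin n → ℤ) → ℤ) (hf : IsQTFSupportedOn G f) :
    totalInf f ≤ Real.sqrt ((n : ℝ) + Real.sqrt (2 * G.edgeFinset.card * n)) := by
  classical
  obtain ⟨a, b, c, hadj, hnz0, hfeq0⟩ := hf
  have hc : ∀ (inst : DecidableEq (Fin n)),
      @cube (Fin n) _ inst = @cube (Fin n) _ (instDecidableEqFin n) := fun inst => by
    rw [Subsingleton.elim inst (instDecidableEqFin n)]
  have hnz : ∀ x ∈ cube (Fin n), quadPoly a b c x ≠ 0 := fun x hx =>
    hnz0 x (by rw [hc]; exact hx)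
  have hfeq : ∀ x ∈ cube (Fin n), f x = sgn (quadPoly a b c x) := fun x hx =>
    hfeq0 x (by rw [hc]; exact hx)
  set N : ℝ := (((cube (Fin n)).card : ℕ) : ℝ) with hNdef
  have hNpos : (0:ℝ) < N := by
    rw [hNdef]
    exact_mod_cast Finset.card_pos.2 (cube_nonempty (Fin n))
  set K : ℝ := Real.sqrt (2 * (G.edgeFinset.card : ℝ) * (n : ℝ)) with hKdef
  have hKnn : 0 ≤ K := Real.sqrt_nonneg _
  have hSdeg : ∀ i : Fin n,
      (((Finset.univ.filter (fun j => Asym a i j ≠ 0)).card : ℕ) : ℝ) ≤ (G.degree i : ℝ) := by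
    intro i
    have hsub : Finset.univ.filter (fun j => Asym a i j ≠ 0) ⊆ G.neighborFinset i := by
      intro j hj
      have hA : Asym a i j ≠ 0 := (Finset.mem_filter.1 hj).2
      rw [SimpleGraph.mem_neighborFinset]
      unfold Asym at hA
      rcases lt_trichotomy i j with h | h | h
      · rw [if_pos h] at hA; exact hadj i j h hA
      · exfalso
        apply hA
        rw [if_neg (by rw [h]; exact lt_irrefl j), if_neg (by rw [h]; exact lt_irrefl j)]
      · rw [if_neg (asymm h), if_pos h] at hA; exact (hadj j i h hA).symm
    have hcard := Finset.card_le_card hsub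
    rw [SimpleGraph.card_neighborFinset_eq_degree] at hcard
    exact_mod_cast hcard
  have hdegsum : ∑ i : Fin n, Real.sqrt (G.degree i) ≤ K := by
    rw [hKdef]
    exact degsum_le G
  have hstep1 : ∑ i : Fin n, ∑ x ∈ cube (Fin n), (if f x ≠ f (flipAt x i) then (1:ℝ) else 0)
      ≤ ∑ x ∈ cube (Fin n), ((f x : ℤ) : ℝ) * (∑ i : Fin n, uu a b i x) := by
    calc ∑ i : Fin n, ∑ x ∈ cube (Fin n), (if f x ≠ f (flipAt x i) then (1:ℝ) else 0)
        ≤ ∑ i : Fin n, ∑ x ∈ cube (Fin n), ((f x : ℤ) : ℝ) * uu a b i x :=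
          Finset.sum_le_sum fun i _ => step1 a b c f hnz hfeq i
      _ = ∑ x ∈ cube (Fin n), ∑ i : Fin n, ((f x : ℤ) : ℝ) * uu a b i x := Finset.sum_comm
      _ = _ := Finset.sum_congr rfl fun x _ => (Finset.mul_sum _ _ _).symm
  have hF2 : ∑ x ∈ cube (Fin n), (((f x : ℤ) : ℝ)) ^ 2 = N := by
    rw [Finset.sum_congr rfl (g := fun _ => (1:ℝ)) fun x hx => ?_, Finset.sum_const,
      nsmul_eq_mul, mul_one]
    rcases pm_cast a b c (hfeq x hx) (hnz x hx) with h | h <;> rw [h] <;> norm_num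
  have hexp : ∑ x ∈ cube (Fin n), (∑ i : Fin n, uu a b i x) ^ 2
      = ∑ i : Fin n, ∑ j : Fin n, ∑ x ∈ cube (Fin n), uu a b i x * uu a b j x := by
    have e : ∀ x : Fin n → ℤ, (∑ i : Fin n, uu a b i x) ^ 2
        = ∑ i : Fin n, ∑ j : Fin n, uu a b i x * uu a b j x := by
      intro x; rw [sq, Finset.sum_mul_sum]
    rw [Finset.sum_congr rfl fun x _ => e x, Finset.sum_comm]
    exact Finset.sum_congr rfl fun i _ => Finset.sum_comm
  have hdiag : ∀ i : Fin n, ∑ x ∈ cube (Fin n), uu a b i x * uu a b i x ≤ N := by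
    intro i
    calc ∑ x ∈ cube (Fin n), uu a b i x * uu a b i x ≤ ∑ _x ∈ cube (Fin n), (1:ℝ) :=
        Finset.sum_le_sum fun x hx => by
          have h1 := coord_sq hx i
          have h2 := sgn_sq_le_one (lin a b i x)
          have e : uu a b i x * uu a b i x
              = ((x i : ℤ) : ℝ) ^ 2 * ((sgn (lin a b i x) : ℤ) : ℝ) ^ 2 := by
            unfold uu sg; ring
          rw [e, h1, one_mul]; exact h2
      _ = N := by rw [Finset.sum_const, nsmul_eq_mul, mul_one]
  set T : Fin n → Fin n → ℝ := fun i j => ∑ x ∈ cube (Fin n), dd a b i j x ^ 2 with hT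
  have hoff : ∀ i : Fin n, ∀ j ∈ Finset.univ.erase i,
      2 * ∑ x ∈ cube (Fin n), uu a b i x * uu a b j x ≤ T i j + T j i := by
    intro i j hj
    have hij : i ≠ j := fun h => (Finset.mem_erase.1 hj).1 h.symm
    rw [sum_uu_mul a b hij]
    have e : ∀ x ∈ cube (Fin n), 2 * (dd a b i j x * dd a b j i x)
        ≤ dd a b i j x ^ 2 + dd a b j i x ^ 2 := fun x _ => by
      nlinarith [sq_nonneg (dd a b i j x - dd a b j i x)]
    calc 2 * ∑ x ∈ cube (Fin n), dd a b i j x * dd a b j i x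
        = ∑ x ∈ cube (Fin n), 2 * (dd a b i j x * dd a b j i x) := by rw [Finset.mul_sum]
      _ ≤ ∑ x ∈ cube (Fin n), (dd a b i j x ^ 2 + dd a b j i x ^ 2) := Finset.sum_le_sum e
      _ = T i j + T j i := by rw [Finset.sum_add_distrib]
  have hswap : ∑ i : Fin n, ∑ j ∈ Finset.univ.erase i, T j i
      = ∑ j : Fin n, ∑ i ∈ Finset.univ.erase j, T j i := by
    apply Finset.sum_comm'
    intro x y
    simp only [Finset.mem_univ, true_and, and_true, Finset.mem_erase]
    exact ne_comm
  have hoffsum : ∑ i : Fin n, ∑ j ∈ Finset.univ.erase i,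
      (∑ x ∈ cube (Fin n), uu a b i x * uu a b j x)
      ≤ ∑ i : Fin n, ∑ j ∈ Finset.univ.erase i, T i j := by
    have h3 : ∑ i : Fin n, ∑ j ∈ Finset.univ.erase i,
        2 * (∑ x ∈ cube (Fin n), uu a b i x * uu a b j x)
        ≤ ∑ i : Fin n, ∑ j ∈ Finset.univ.erase i, (T i j + T j i) :=
      Finset.sum_le_sum fun i _ => Finset.sum_le_sum fun j hj => hoff i j hj
    have h4 : ∑ i : Fin n, ∑ j ∈ Finset.univ.erase i, (T i j + T j i)
        = 2 * ∑ i : Fin n, ∑ j ∈ Finset.univ.erase i, T i j := by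
      simp only [Finset.sum_add_distrib]
      rw [hswap]
      ring
    have h5 : ∑ i : Fin n, ∑ j ∈ Finset.univ.erase i,
        2 * (∑ x ∈ cube (Fin n), uu a b i x * uu a b j x)
        = 2 * ∑ i : Fin n, ∑ j ∈ Finset.univ.erase i,
          (∑ x ∈ cube (Fin n), uu a b i x * uu a b j x) := by
      simp only [Finset.mul_sum]
    rw [h5, h4] at h3
    linarith
  have hstep4' : ∑ i : Fin n, ∑ j ∈ Finset.univ.erase i, T i j ≤ N * K := by
    calc ∑ i : Fin n, ∑ j ∈ Finset.univ.erase i, T i j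
        ≤ ∑ i : Fin n, N * Real.sqrt (G.degree i) := by
          refine Finset.sum_le_sum fun i _ => (step4 a b i).trans ?_
          exact mul_le_mul_of_nonneg_left
            (Real.sqrt_le_sqrt (hSdeg i)) hNpos.le
      _ = N * ∑ i : Fin n, Real.sqrt (G.degree i) := (Finset.mul_sum _ _ _).symm
      _ ≤ N * K := mul_le_mul_of_nonneg_left hdegsum hNpos.le
  have hgg2 : ∑ x ∈ cube (Fin n), (∑ i : Fin n, uu a b i x) ^ 2 ≤ N * ((n:ℝ) + K) := by
    rw [hexp]
    have split : ∀ i : Fin n, ∑ j : Fin n, ∑ x ∈ cube (Fin n), uu a b i x * uu a b j x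
        = (∑ j ∈ Finset.univ.erase i, ∑ x ∈ cube (Fin n), uu a b i x * uu a b j x)
          + ∑ x ∈ cube (Fin n), uu a b i x * uu a b i x := fun i =>
      (Finset.sum_erase_add _ _ (Finset.mem_univ i)).symm
    calc ∑ i : Fin n, ∑ j : Fin n, ∑ x ∈ cube (Fin n), uu a b i x * uu a b j x
        = (∑ i : Fin n, ∑ j ∈ Finset.univ.erase i, ∑ x ∈ cube (Fin n), uu a b i x * uu a b j x)
          + ∑ i : Fin n, ∑ x ∈ cube (Fin n), uu a b i x * uu a b i x := by
          rw [Finset.sum_congr rfl fun i _ => split i, Finset.sum_add_distrib]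
      _ ≤ N * K + ∑ i : Fin n, N := by
          exact add_le_add (hoffsum.trans hstep4') (Finset.sum_le_sum fun i _ => hdiag i)
      _ = N * ((n:ℝ) + K) := by
          rw [Finset.sum_const, Finset.card_univ, Fintype.card_fin, nsmul_eq_mul]
          ring
  have hfinal2 : ∑ i : Fin n, ∑ x ∈ cube (Fin n), (if f x ≠ f (flipAt x i) then (1:ℝ) else 0)
      ≤ N * Real.sqrt ((n:ℝ) + K) := by
    calc ∑ i : Fin n, ∑ x ∈ cube (Fin n), (if f x ≠ f (flipAt x i) then (1:ℝ) else 0)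
        ≤ ∑ x ∈ cube (Fin n), ((f x : ℤ) : ℝ) * (∑ i : Fin n, uu a b i x) := hstep1
      _ ≤ Real.sqrt (∑ x ∈ cube (Fin n), (((f x : ℤ) : ℝ)) ^ 2)
          * Real.sqrt (∑ x ∈ cube (Fin n), (∑ i : Fin n, uu a b i x) ^ 2) :=
          sum_le_sqrt_mul _ _ _
      _ ≤ Real.sqrt N * Real.sqrt (N * ((n:ℝ) + K)) := by
          exact mul_le_mul (le_of_eq (by rw [hF2])) (Real.sqrt_le_sqrt hgg2)
            (Real.sqrt_nonneg _) (Real.sqrt_nonneg _)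
      _ = N * Real.sqrt ((n:ℝ) + K) := by
          rw [Real.sqrt_mul hNpos.le, ← mul_assoc, Real.mul_self_sqrt hNpos.le]
  have htot : totalInf f
      = (∑ i : Fin n, ∑ x ∈ cube (Fin n), (if f x ≠ f (flipAt x i) then (1:ℝ) else 0)) / N := by
    unfold totalInf coordInf
    rw [← Finset.sum_div, hNdef]
    congr!
  rw [htot, div_le_iff₀ hNpos]
  calc ∑ i : Fin n, ∑ x ∈ cube (Fin n), (if f x ≠ f (flipAt x i) then (1:ℝ) else 0)
      ≤ N * Real.sqrt ((n:ℝ) + K) := hfinal2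
    _ = Real.sqrt ((n:ℝ) + K) * N := mul_comm _ _
end
end

section
/- (Covering Lemma) Let G be a graph on vertex set {1,...,n} and let V_1, ..., V_k be vertex subsets with V_1 ∪ ... ∪ V_k = {1,...,n}, and let G_i denote the induced subgraph of G on V_i. Then I[G] ≤ I[G_1] + ... + I[G_k], i.e., for every QTF f supported on G, I[f] ≤ Σ_{i=1}^k I[G_i]. -/
open Finset
open scoped Classical

noncomputable section

/-- The maximal QTF influence of a graph `G`: the supremum of total influences of QTFs
supported on `G`. -/
def maxInf {V : Type*} [Fintype V] [LinearOrder V] (G : SimpleGraph V) : ℝ :=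
  sSup {r : ℝ | ∃ f, IsQTFSupportedOn G f ∧ r = totalInf f}

namespace Aux


lemma cube_nonempty (V : Type*) [Fintype V] [DecidableEq V] : (cube V).Nonempty :=
  ⟨fun _ => 1, by simp [cube, Fintype.mem_piFinset]⟩

lemma cube_card_pos (V : Type*) [Fintype V] [DecidableEq V] : 0 < ((cube V).card : ℝ) := by
  exact_mod_cast Finset.card_pos.mpr (cube_nonempty V)

lemma coordInf_nonneg {V : Type*} [Fintype V] [DecidableEq V] {α : Type*}
    (f : (V → ℤ) → α) (i : V) : 0 ≤ coordInf f i := by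
  apply div_nonneg _ (Nat.cast_nonneg _)
  apply Finset.sum_nonneg
  intro x _
  split <;> norm_num

lemma coordInf_le_one {V : Type*} [Fintype V] [DecidableEq V] {α : Type*}
    (f : (V → ℤ) → α) (i : V) : coordInf f i ≤ 1 := by
  rw [coordInf, div_le_one (cube_card_pos V)]
  calc (∑ x ∈ cube V, if f x ≠ f (flipAt x i) then (1 : ℝ) else 0)
      ≤ ∑ x ∈ cube V, 1 := by
        apply Finset.sum_le_sum; intro x _; split <;> norm_num
    _ = ((cube V).card : ℝ) := by simp

lemma totalInf_nonneg {V : Type*} [Fintype V] [DecidableEq V] {α : Type*}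
    (f : (V → ℤ) → α) : 0 ≤ totalInf f :=
  Finset.sum_nonneg fun i _ => coordInf_nonneg f i

lemma totalInf_le_card {V : Type*} [Fintype V] [DecidableEq V] {α : Type*}
    (f : (V → ℤ) → α) : totalInf f ≤ Fintype.card V := by
  calc totalInf f ≤ ∑ _i : V, (1 : ℝ) := Finset.sum_le_sum fun i _ => coordInf_le_one f i
    _ = Fintype.card V := by simp


variable {n : ℕ}

/-- Merge: take values from `z` on `S` and from `y` off `S`. -/
def merge (S : Finset (Fin n)) (z : (↑S : Set (Fin n)) → ℤ) (y : Fin n → ℤ) : Fin n → ℤ :=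
  fun v => if h : v ∈ S then z ⟨v, h⟩ else y v

lemma merge_apply_mem {S : Finset (Fin n)} (z : (↑S : Set (Fin n)) → ℤ) (y : Fin n → ℤ)
    {v : Fin n} (h : v ∈ S) : merge S z y v = z ⟨v, h⟩ := dif_pos h

lemma merge_apply_coe {S : Finset (Fin n)} (z : (↑S : Set (Fin n)) → ℤ) (y : Fin n → ℤ)
    (i : (↑S : Set (Fin n))) : merge S z y ↑i = z i := by
  rw [merge_apply_mem z y i.2]

lemma merge_apply_not_mem {S : Finset (Fin n)} (z : (↑S : Set (Fin n)) → ℤ) (y : Fin n → ℤ)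
    {v : Fin n} (h : v ∉ S) : merge S z y v = y v := dif_neg h

lemma merge_mem_cube {S : Finset (Fin n)} {z : (↑S : Set (Fin n)) → ℤ} {y : Fin n → ℤ}
    (hz : z ∈ cube (↑S : Set (Fin n))) (hy : y ∈ cube (Fin n)) :
    merge S z y ∈ cube (Fin n) := by
  simp only [cube, Fintype.mem_piFinset] at *
  intro v
  by_cases h : v ∈ S
  · rw [merge_apply_mem z y h]; exact hz _
  · rw [merge_apply_not_mem z y h]; exact hy _

lemma merge_flip {S : Finset (Fin n)} (z : (↑S : Set (Fin n)) → ℤ) (y : Fin n → ℤ)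
    (i : (↑S : Set (Fin n))) :
    merge S (flipAt z i) y = flipAt (merge S z y) ↑i := by
  funext v
  by_cases hvi : v = (↑i : Fin n)
  · rw [hvi, merge_apply_coe, flipAt, flipAt, Function.update_self, Function.update_self,
      merge_apply_coe]
  · by_cases h : v ∈ S
    · rw [merge_apply_mem _ y h, flipAt, flipAt,
        Function.update_of_ne (fun he => hvi (congrArg Subtype.val he)),
        Function.update_of_ne hvi, merge_apply_mem z y h]
    · rw [merge_apply_not_mem _ y h, flipAt, Function.update_of_ne hvi,
        merge_apply_not_mem z y h]

/-- Counting lemma: summing `g ∘ merge` over all pairs gives `|cube S|` copies of the sum of `g`. -/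
lemma sum_merge (S : Finset (Fin n)) (g : (Fin n → ℤ) → ℝ) :
    ∑ y ∈ cube (Fin n), ∑ z ∈ cube (↑S : Set (Fin n)), g (merge S z y)
      = ((cube (↑S : Set (Fin n))).card : ℝ) * ∑ x ∈ cube (Fin n), g x := by
  rw [← Finset.sum_product']
  have : ((cube (↑S : Set (Fin n))).card : ℝ) * ∑ x ∈ cube (Fin n), g x
      = ∑ p ∈ (cube (Fin n)) ×ˢ (cube (↑S : Set (Fin n))), g p.1 := by
    rw [Finset.sum_product]
    simp only [Finset.sum_const, nsmul_eq_mul]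
    rw [← Finset.mul_sum, mul_comm]
  rw [this]
  refine Finset.sum_nbij' (fun p => (merge S p.2 p.1, fun j => p.1 ↑j))
    (fun q => (merge S q.2 q.1, fun j => q.1 ↑j)) ?_ ?_ ?_ ?_ ?_
  · rintro ⟨y, z⟩ hp
    rw [Finset.mem_product] at hp ⊢
    refine ⟨merge_mem_cube hp.2 hp.1, ?_⟩
    simp only [cube, Fintype.mem_piFinset] at *
    intro j; exact hp.1 _
  · rintro ⟨x, w⟩ hq
    rw [Finset.mem_product] at hq ⊢
    refine ⟨merge_mem_cube hq.2 hq.1, ?_⟩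
    simp only [cube, Fintype.mem_piFinset] at *
    intro j; exact hq.1 _
  · rintro ⟨y, z⟩ _
    refine Prod.ext ?_ ?_
    · funext v
      by_cases h : v ∈ S
      · simp [merge_apply_mem _ _ h]
      · simp [merge_apply_not_mem _ _ h]
    · funext j
      simp [merge_apply_coe]
  · rintro ⟨x, w⟩ _
    refine Prod.ext ?_ ?_
    · funext v
      by_cases h : v ∈ S
      · simp [merge_apply_mem _ _ h]
      · simp [merge_apply_not_mem _ _ h]
    · funext j
      simp [merge_apply_coe]
  · rintro ⟨y, z⟩ _
    rfl


/-- Restriction of `f` to the subcube over `S`, with off-`S` coordinates fixed to `y`. -/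
def restrict (S : Finset (Fin n)) (f : (Fin n → ℤ) → ℤ) (y : Fin n → ℤ) :
    ((↑S : Set (Fin n)) → ℤ) → ℤ :=
  fun z => f (merge S z y)

lemma coordInf_decomp (S : Finset (Fin n)) (f : (Fin n → ℤ) → ℤ) {v : Fin n}
    (hv : v ∈ (↑S : Set (Fin n))) :
    coordInf f v =
      (∑ y ∈ cube (Fin n), coordInf (restrict S f y) ⟨v, hv⟩) / (cube (Fin n)).card := by
  set g : (Fin n → ℤ) → ℝ := fun x => if f x ≠ f (flipAt x v) then 1 else 0 with hg
  have hco : ∀ y : Fin n → ℤ, coordInf (restrict S f y) ⟨v, hv⟩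
      = (∑ z ∈ cube (↑S : Set (Fin n)), g (merge S z y)) / (cube (↑S : Set (Fin n))).card := by
    intro y
    unfold coordInf
    congr 1
    apply Finset.sum_congr rfl
    intro z _
    have : restrict S f y (flipAt z ⟨v, hv⟩) = f (flipAt (merge S z y) v) := by
      rw [restrict, merge_flip]
    rw [this, hg, restrict]
    simp
  have hM : ((cube (↑S : Set (Fin n))).card : ℝ) ≠ 0 := ne_of_gt (cube_card_pos _)
  have : ∑ y ∈ cube (Fin n), coordInf (restrict S f y) ⟨v, hv⟩
      = ∑ x ∈ cube (Fin n), g x := by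
    calc ∑ y ∈ cube (Fin n), coordInf (restrict S f y) ⟨v, hv⟩
        = (∑ y ∈ cube (Fin n), ∑ z ∈ cube (↑S : Set (Fin n)), g (merge S z y))
            / (cube (↑S : Set (Fin n))).card := by
          rw [Finset.sum_div]
          exact Finset.sum_congr rfl fun y _ => hco y
      _ = ∑ x ∈ cube (Fin n), g x := by
          rw [sum_merge, mul_comm, mul_div_assoc, div_self hM, mul_one]
  rw [this, coordInf]
  congr 1
  exact Finset.sum_congr rfl fun x _ => by simp [hg]


/-- Restricted linear coefficients. -/
def Bres (S : Finset (Fin n)) (a : Fin n → Fin n → ℝ) (b : Fin n → ℝ) (y : Fin n → ℤ) :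
    Fin n → ℝ :=
  fun p => b p + ∑ j : Fin n,
    if j ∉ S then ((if p < j then a p j else 0) + (if j < p then a j p else 0)) * (y j : ℝ) else 0

/-- Restricted constant coefficient. -/
def Cres (S : Finset (Fin n)) (a : Fin n → Fin n → ℝ) (b : Fin n → ℝ) (c : ℝ)
    (y : Fin n → ℤ) : ℝ :=
  (∑ i : Fin n, ∑ j : Fin n, if i < j ∧ i ∉ S ∧ j ∉ S then a i j * (y i : ℝ) * (y j : ℝ) else 0)
  + (∑ i : Fin n, if i ∉ S then b i * (y i : ℝ) else 0) + c

lemma sum_coe (S : Finset (Fin n)) (g : Fin n → ℝ) :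
    (∑ i : (↑S : Set (Fin n)), g ↑i) = ∑ p : Fin n, if p ∈ S then g p else 0 := by
  rw [Finset.sum_ite_mem, Finset.univ_inter]
  exact (Finset.sum_subtype (p := fun x => x ∈ (↑S : Set (Fin n))) (s := S)
    (fun x => by simp) g).symm

lemma core (S : Finset (Fin n)) (a : Fin n → Fin n → ℝ) (b : Fin n → ℝ) (c : ℝ)
    (y : Fin n → ℤ) (m : Fin n → ℤ) (hm : ∀ p ∉ S, m p = y p) :
    (∑ p : Fin n, ∑ q : Fin n,
        if p ∈ S then (if q ∈ S then (if p < q then a p q * (m p : ℝ) * (m q : ℝ) else 0) else 0)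
          else 0)
      + (∑ p : Fin n, if p ∈ S then (Bres S a b y p) * (m p : ℝ) else 0)
      + Cres S a b c y
    = quadPoly a b c m := by
  have hm' : ∀ p, p ∉ S → ((m p : ℝ)) = (y p : ℝ) := fun p hp => by rw [hm p hp]
  unfold Bres Cres quadPoly
  have e1 : (∑ p : Fin n, ∑ q : Fin n,
        if p ∈ S then (if q ∈ S then (if p < q then a p q * (m p : ℝ) * (m q : ℝ) else 0) else 0)
          else 0)
      = ∑ p : Fin n, ∑ q : Fin n,
        if p ∈ S ∧ q ∈ S ∧ p < q then a p q * (m p : ℝ) * (m q : ℝ) else 0 := by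
    apply Finset.sum_congr rfl; intro p _
    apply Finset.sum_congr rfl; intro q _
    split_ifs <;> simp_all
  have e2 : (∑ p : Fin n, if p ∈ S then
        (b p + ∑ j : Fin n, if j ∉ S then
          ((if p < j then a p j else 0) + (if j < p then a j p else 0)) * (y j : ℝ) else 0)
          * (m p : ℝ) else 0)
      = (∑ p : Fin n, if p ∈ S then b p * (m p : ℝ) else 0)
        + ((∑ p : Fin n, ∑ j : Fin n,
              if p ∈ S ∧ j ∉ S ∧ p < j then a p j * (y j : ℝ) * (m p : ℝ) else 0)
          + (∑ p : Fin n, ∑ j : Fin n,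
              if p ∈ S ∧ j ∉ S ∧ j < p then a j p * (y j : ℝ) * (m p : ℝ) else 0)) := by
    rw [← Finset.sum_add_distrib, ← Finset.sum_add_distrib]
    apply Finset.sum_congr rfl
    intro p _
    by_cases hp : p ∈ S
    · simp only [hp, if_true, true_and]
      rw [add_mul, Finset.sum_mul, ← Finset.sum_add_distrib]
      congr 1
      apply Finset.sum_congr rfl
      intro j _
      by_cases hj : j ∉ S
      · by_cases h1 : p < j
        · have h2 : ¬ j < p := lt_asymm h1
          rw [if_pos hj, if_pos (show j ∉ S ∧ p < j from ⟨hj, h1⟩),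
            if_neg (show ¬(j ∉ S ∧ j < p) from fun h => h2 h.2), if_neg h2, if_pos h1]
          ring
        · by_cases h2 : j < p
          · rw [if_pos hj, if_neg (show ¬(j ∉ S ∧ p < j) from fun h => h1 h.2),
              if_pos (show j ∉ S ∧ j < p from ⟨hj, h2⟩), if_pos h2, if_neg h1]
            ring
          · rw [if_pos hj, if_neg (show ¬(j ∉ S ∧ p < j) from fun h => h1 h.2),
              if_neg (show ¬(j ∉ S ∧ j < p) from fun h => h2 h.2), if_neg h1, if_neg h2]
            ring
      · rw [if_neg hj, if_neg (show ¬(j ∉ S ∧ p < j) from fun h => hj h.1),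
          if_neg (show ¬(j ∉ S ∧ j < p) from fun h => hj h.1)]
        ring
    · simp [hp]
  have hcomm : (∑ p : Fin n, ∑ j : Fin n,
        if p ∈ S ∧ j ∉ S ∧ j < p then a j p * (y j : ℝ) * (m p : ℝ) else 0)
      = ∑ p : Fin n, ∑ j : Fin n,
        if j ∈ S ∧ p ∉ S ∧ p < j then a p j * (y p : ℝ) * (m j : ℝ) else 0 :=
    Finset.sum_comm
  have hq : (∑ p : Fin n, ∑ q : Fin n,
        if p ∈ S ∧ q ∈ S ∧ p < q then a p q * (m p : ℝ) * (m q : ℝ) else 0)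
      + (∑ p : Fin n, ∑ q : Fin n,
          if p ∈ S ∧ q ∉ S ∧ p < q then a p q * (y q : ℝ) * (m p : ℝ) else 0)
      + (∑ p : Fin n, ∑ q : Fin n,
          if q ∈ S ∧ p ∉ S ∧ p < q then a p q * (y p : ℝ) * (m q : ℝ) else 0)
      + (∑ p : Fin n, ∑ q : Fin n,
          if p < q ∧ p ∉ S ∧ q ∉ S then a p q * (y p : ℝ) * (y q : ℝ) else 0)
      = ∑ p : Fin n, ∑ q : Fin n, if p < q then a p q * (m p : ℝ) * (m q : ℝ) else 0 := by
    rw [← Finset.sum_add_distrib, ← Finset.sum_add_distrib, ← Finset.sum_add_distrib]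
    apply Finset.sum_congr rfl
    intro p _
    rw [← Finset.sum_add_distrib, ← Finset.sum_add_distrib, ← Finset.sum_add_distrib]
    apply Finset.sum_congr rfl
    intro q _
    by_cases hpq : p < q
    · by_cases hp : p ∈ S <;> by_cases hq' : q ∈ S
      · rw [if_pos (show p ∈ S ∧ q ∈ S ∧ p < q from ⟨hp, hq', hpq⟩),
          if_neg (show ¬(p ∈ S ∧ q ∉ S ∧ p < q) from fun h => h.2.1 hq'),
          if_neg (show ¬(q ∈ S ∧ p ∉ S ∧ p < q) from fun h => h.2.1 hp),
          if_neg (show ¬(p < q ∧ p ∉ S ∧ q ∉ S) from fun h => h.2.1 hp), if_pos hpq]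
        ring
      · rw [if_neg (show ¬(p ∈ S ∧ q ∈ S ∧ p < q) from fun h => hq' h.2.1),
          if_pos (show p ∈ S ∧ q ∉ S ∧ p < q from ⟨hp, hq', hpq⟩),
          if_neg (show ¬(q ∈ S ∧ p ∉ S ∧ p < q) from fun h => hq' h.1),
          if_neg (show ¬(p < q ∧ p ∉ S ∧ q ∉ S) from fun h => h.2.1 hp), if_pos hpq,
          hm' q hq']
        ring
      · rw [if_neg (show ¬(p ∈ S ∧ q ∈ S ∧ p < q) from fun h => hp h.1),
          if_neg (show ¬(p ∈ S ∧ q ∉ S ∧ p < q) from fun h => hp h.1),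
          if_pos (show q ∈ S ∧ p ∉ S ∧ p < q from ⟨hq', hp, hpq⟩),
          if_neg (show ¬(p < q ∧ p ∉ S ∧ q ∉ S) from fun h => h.2.2 hq'), if_pos hpq,
          hm' p hp]
        ring
      · rw [if_neg (show ¬(p ∈ S ∧ q ∈ S ∧ p < q) from fun h => hp h.1),
          if_neg (show ¬(p ∈ S ∧ q ∉ S ∧ p < q) from fun h => hp h.1),
          if_neg (show ¬(q ∈ S ∧ p ∉ S ∧ p < q) from fun h => hq' h.1),
          if_pos (show p < q ∧ p ∉ S ∧ q ∉ S from ⟨hpq, hp, hq'⟩), if_pos hpq,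
          hm' p hp, hm' q hq']
        ring
    · simp [hpq]
  have hl : (∑ p : Fin n, if p ∈ S then b p * (m p : ℝ) else 0)
      + (∑ p : Fin n, if p ∉ S then b p * (y p : ℝ) else 0)
      = ∑ p : Fin n, b p * (m p : ℝ) := by
    rw [← Finset.sum_add_distrib]
    apply Finset.sum_congr rfl
    intro p _
    by_cases hp : p ∈ S
    · simp [hp]
    · simp [hp, hm' p hp]
  rw [e1, e2, hcomm]
  linarith [hq, hl]

lemma quad_restrict (S : Finset (Fin n)) (a : Fin n → Fin n → ℝ) (b : Fin n → ℝ) (c : ℝ)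
    (y : Fin n → ℤ) (z : (↑S : Set (Fin n)) → ℤ) :
    quadPoly (fun i j : (↑S : Set (Fin n)) => a ↑i ↑j)
        (fun i : (↑S : Set (Fin n)) => Bres S a b y ↑i) (Cres S a b c y) z
      = quadPoly a b c (merge S z y) := by
  set m : Fin n → ℤ := merge S z y with hmdef
  have hm : ∀ p ∉ S, m p = y p := fun p hp => merge_apply_not_mem z y hp
  have hz : ∀ (i : (↑S : Set (Fin n))), z i = m ↑i := fun i => (merge_apply_coe z y i).symm
  rw [← core S a b c y m hm]
  unfold quadPoly
  congr 1
  congr 1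
  · calc (∑ i : (↑S : Set (Fin n)), ∑ j : (↑S : Set (Fin n)),
          if i < j then a ↑i ↑j * (z i : ℝ) * (z j : ℝ) else 0)
        = ∑ i : (↑S : Set (Fin n)), ∑ j : (↑S : Set (Fin n)),
          if (↑i : Fin n) < ↑j then a ↑i ↑j * (m ↑i : ℝ) * (m ↑j : ℝ) else 0 := by
          apply Finset.sum_congr rfl; intro i _
          apply Finset.sum_congr rfl; intro j _
          rw [hz i, hz j]
          exact if_congr Subtype.coe_lt_coe.symm rfl rfl
      _ = ∑ p : Fin n, if p ∈ S then (∑ j : (↑S : Set (Fin n)),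
            if p < ↑j then a p ↑j * (m p : ℝ) * (m ↑j : ℝ) else 0) else 0 :=
          sum_coe S (fun p => ∑ j : (↑S : Set (Fin n)),
            if p < ↑j then a p ↑j * (m p : ℝ) * (m ↑j : ℝ) else 0)
      _ = ∑ p : Fin n, ∑ q : Fin n,
            if p ∈ S then (if q ∈ S then (if p < q then a p q * (m p : ℝ) * (m q : ℝ) else 0)
              else 0) else 0 := by
          apply Finset.sum_congr rfl; intro p _
          by_cases hp : p ∈ S
          · rw [if_pos hp]
            exact (sum_coe S (fun q => if p < q then a p q * (m p : ℝ) * (m q : ℝ) else 0)).trans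
              (Finset.sum_congr rfl (fun q _ => by rw [if_pos hp]))
          · rw [if_neg hp]
            rw [Finset.sum_congr rfl (fun q _ => if_neg hp), Finset.sum_const, smul_zero]
  · calc (∑ i : (↑S : Set (Fin n)), Bres S a b y ↑i * (z i : ℝ))
        = ∑ i : (↑S : Set (Fin n)), Bres S a b y ↑i * (m ↑i : ℝ) := by
          apply Finset.sum_congr rfl; intro i _
          rw [hz i]
      _ = ∑ p : Fin n, if p ∈ S then Bres S a b y p * (m p : ℝ) else 0 :=
          sum_coe S (fun p => Bres S a b y p * (m p : ℝ))



lemma decEq_eq {V : Type*} (d1 d2 : DecidableEq V) : d1 = d2 := by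
  funext a b
  exact Subsingleton.elim _ _

lemma mem_cube_trans {V : Type*} {ft1 ft2 : Fintype V} {d1 d2 : DecidableEq V} {x : V → ℤ}
    (h : x ∈ @cube V ft1 d1) : x ∈ @cube V ft2 d2 := by
  obtain rfl : ft1 = ft2 := Subsingleton.elim _ _
  obtain rfl : d1 = d2 := decEq_eq _ _
  exact h

lemma totalInf_trans {V : Type*} {ft1 ft2 : Fintype V} {d1 d2 : DecidableEq V} {α : Type*}
    (f : (V → ℤ) → α) : @totalInf V ft1 d1 α f = @totalInf V ft2 d2 α f := by
  obtain rfl : ft1 = ft2 := Subsingleton.elim _ _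
  obtain rfl : d1 = d2 := decEq_eq _ _
  rfl

set_option maxHeartbeats 400000 in
lemma restrict_isQTF {G : SimpleGraph (Fin n)} {f : (Fin n → ℤ) → ℤ}
    (hf : IsQTFSupportedOn G f) (S : Finset (Fin n)) {y : Fin n → ℤ} (hy : y ∈ cube (Fin n)) :
    IsQTFSupportedOn (G.induce (↑S : Set (Fin n))) (restrict S f y) := by
  obtain ⟨a, b, c, hadj, hnz, hval⟩ := hf
  refine ⟨fun i j => a ↑i ↑j, fun i => Bres S a b y ↑i, Cres S a b c y, ?_, ?_, ?_⟩
  · intro i j hij ha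
    have : (↑i : Fin n) < ↑j := Subtype.coe_lt_coe.mpr hij
    exact hadj ↑i ↑j this ha
  · intro z hz
    rw [quad_restrict]
    exact hnz _ (mem_cube_trans (merge_mem_cube (mem_cube_trans hz) hy))
  · intro z hz
    rw [quad_restrict]
    exact hval _ (mem_cube_trans (merge_mem_cube (mem_cube_trans hz) hy))

lemma bddAbove_infSet {V : Type*} [Fintype V] [LinearOrder V] (G : SimpleGraph V) :
    BddAbove {r : ℝ | ∃ f, IsQTFSupportedOn G f ∧ r = totalInf f} := by
  refine ⟨Fintype.card V, ?_⟩
  rintro r ⟨f, _, rfl⟩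
  exact totalInf_le_card f

lemma le_maxInf {V : Type*} [Fintype V] [LinearOrder V] {G : SimpleGraph V}
    {f : (V → ℤ) → ℤ} (hf : IsQTFSupportedOn G f) : totalInf f ≤ maxInf G :=
  le_csSup (bddAbove_infSet G) ⟨f, hf, rfl⟩

end Aux

/-- Covering lemma: if vertex subsets `Vs 1, …, Vs k` cover `{1,…,n}`, then every QTF
supported on `G` has total influence at most the sum of the maximal QTF influences of the
induced subgraphs on the `Vs i`. -/
theorem covering_lemma {n k : ℕ} (G : SimpleGraph (Fin n)) (Vs : Fin k → Finset (Fin n))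
    (hcover : ∀ v : Fin n, ∃ i, v ∈ Vs i)
    (f : (Fin n → ℤ) → ℤ) (hf : IsQTFSupportedOn G f) :
    totalInf f ≤ ∑ i : Fin k, maxInf (G.induce (↑(Vs i) : Set (Fin n))) := by
  classical
  set idx : Fin n → Fin k := fun v => (hcover v).choose with hidxdef
  have hidx : ∀ v : Fin n, v ∈ Vs (idx v) := fun v => (hcover v).choose_spec
  rw [totalInf, ← Finset.sum_fiberwise Finset.univ idx (coordInf f)]
  apply Finset.sum_le_sum
  intro i _
  set S := Vs i with hS
  set N : ℝ := ((cube (Fin n)).card : ℝ) with hNdef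
  have hNpos : 0 < N := Aux.cube_card_pos _
  set D : (Fin n → ℤ) → Fin n → ℝ := fun y v =>
    if hv : v ∈ (↑S : Set (Fin n)) then coordInf (Aux.restrict S f y) ⟨v, hv⟩ else 0 with hD
  have hDnn : ∀ y v, 0 ≤ D y v := by
    intro y v
    rw [hD]
    dsimp only
    split
    · exact Aux.coordInf_nonneg _ _
    · exact le_rfl
  have hmemS : ∀ v ∈ Finset.univ.filter (fun v => idx v = i), v ∈ S := by
    intro v hv
    rw [Finset.mem_filter] at hv
    rw [hS, ← hv.2]
    exact hidx v
  have step1 : ∀ v ∈ Finset.univ.filter (fun v => idx v = i),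
      coordInf f v = (∑ y ∈ cube (Fin n), D y v) / N := by
    intro v hv
    have hvS : v ∈ (↑S : Set (Fin n)) := Finset.mem_coe.mpr (hmemS v hv)
    rw [Aux.coordInf_decomp S f hvS]
    congr 1
    apply Finset.sum_congr rfl
    intro y _
    simp only [hD]
    rw [dif_pos hvS]
  rw [Finset.sum_congr rfl step1, ← Finset.sum_div, div_le_iff₀ hNpos, Finset.sum_comm]
  have step2 : ∀ y ∈ cube (Fin n),
      (∑ v ∈ Finset.univ.filter (fun v => idx v = i), D y v)
        ≤ maxInf (G.induce (↑S : Set (Fin n))) := by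
    intro y hy
    have h1 : (∑ v ∈ Finset.univ.filter (fun v => idx v = i), D y v) ≤ ∑ v ∈ S, D y v :=
      Finset.sum_le_sum_of_subset_of_nonneg (fun v hv => hmemS v hv)
        (fun v _ _ => hDnn y v)
    have h2 : (∑ v ∈ S, D y v) = totalInf (Aux.restrict S f y) := by
      rw [totalInf]
      have e : (∑ j : (↑S : Set (Fin n)), coordInf (Aux.restrict S f y) j)
          = ∑ j : (↑S : Set (Fin n)), D y ↑j := by
        apply Finset.sum_congr rfl
        intro j _
        simp only [hD]
        rw [dif_pos j.2]
      rw [e, Aux.sum_coe S (D y), Finset.sum_ite_mem, Finset.univ_inter]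
    have h3 : totalInf (Aux.restrict S f y) ≤ maxInf (G.induce (↑S : Set (Fin n))) := by
      have := Aux.le_maxInf (Aux.restrict_isQTF hf S hy)
      rwa [Aux.totalInf_trans] at this
    calc (∑ v ∈ Finset.univ.filter (fun v => idx v = i), D y v)
        ≤ ∑ v ∈ S, D y v := h1
      _ = totalInf (Aux.restrict S f y) := h2
      _ ≤ maxInf (G.induce (↑S : Set (Fin n))) := h3
  calc ∑ y ∈ cube (Fin n), ∑ v ∈ Finset.univ.filter (fun v => idx v = i), D y v
      ≤ ∑ _y ∈ cube (Fin n), maxInf (G.induce (↑S : Set (Fin n))) :=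
        Finset.sum_le_sum step2
    _ = maxInf (G.induce (↑S : Set (Fin n))) * N := by
        rw [Finset.sum_const, nsmul_eq_mul, hNdef, mul_comm]
end
end

section
/- (Randomized Covering Lemma) Let G be a graph on vertex set {1,...,n}, let V_1, ..., V_k be vertex subsets with V_1 ∪ ... ∪ V_k = {1,...,n} and G_i the induced subgraph of G on V_i, and let p_1, ..., p_k ≥ 0 with Σ_i p_i = 1 be a probability distribution on the cover. Suppose that for some ε > 0 and every vertex v ∈ {1,...,n}, Σ_{i : v ∈ V_i} p_i ≥ ε. Then I[G] ≤ (1/ε) · Σ_{i=1}^k p_i · I[G_i]. -/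
open Finset
open scoped Classical

noncomputable section

namespace RCL

lemma mem_cube {V : Type*} [Fintype V] [DecidableEq V] {x : V → ℤ} :
    x ∈ cube V ↔ ∀ i, x i = -1 ∨ x i = 1 := by
  simp [cube, Fintype.mem_piFinset]

lemma cube_nonempty (V : Type*) [Fintype V] [DecidableEq V] : (cube V).Nonempty :=
  ⟨fun _ => 1, by simp [mem_cube]⟩

lemma cube_card_pos (V : Type*) [Fintype V] [DecidableEq V] : (0:ℝ) < (cube V).card := by
  exact_mod_cast Finset.card_pos.2 (cube_nonempty V)

lemma coordInf_nonneg {V : Type*} [Fintype V] [DecidableEq V] {α : Type*}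
    (f : (V → ℤ) → α) (i : V) : 0 ≤ coordInf f i := by
  apply div_nonneg _ (le_of_lt (cube_card_pos V))
  apply Finset.sum_nonneg; intro x _; split <;> norm_num

lemma coordInf_le_one {V : Type*} [Fintype V] [DecidableEq V] {α : Type*}
    (f : (V → ℤ) → α) (i : V) : coordInf f i ≤ 1 := by
  rw [coordInf, div_le_one (cube_card_pos V)]
  calc (∑ x ∈ cube V, if f x ≠ f (flipAt x i) then (1 : ℝ) else 0)
      ≤ ∑ x ∈ cube V, 1 := by apply Finset.sum_le_sum; intro x _; split <;> norm_num
    _ = (cube V).card := by simp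

lemma totalInf_le_card {V : Type*} [Fintype V] [DecidableEq V] {α : Type*}
    (f : (V → ℤ) → α) : totalInf f ≤ Fintype.card V := by
  rw [totalInf]
  calc (∑ i : V, coordInf f i) ≤ ∑ _i : V, (1:ℝ) :=
        Finset.sum_le_sum fun i _ => coordInf_le_one f i
    _ = Fintype.card V := by simp

lemma totalInf_le_maxInf {V : Type*} [Fintype V] [DecidableEq V] [LinearOrder V] {G : SimpleGraph V}
    {g : (V → ℤ) → ℤ} (hg : IsQTFSupportedOn G g) : totalInf g ≤ maxInf G := by
  apply le_csSup
  · refine ⟨(Fintype.card V : ℝ), ?_⟩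
    rintro r ⟨f, -, rfl⟩
    refine le_trans (le_of_eq ?_) (totalInf_le_card f)
    congr!
  · refine ⟨g, hg, ?_⟩
    congr!

end RCL

namespace RCL

variable {n : ℕ}

def merge (S : Finset (Fin n)) (y : ↥(↑S : Set (Fin n)) → ℤ) (z : Fin n → ℤ) : Fin n → ℤ :=
  fun v => if h : v ∈ S then y ⟨v, h⟩ else z v

def restr (S : Finset (Fin n)) (x : Fin n → ℤ) : ↥(↑S : Set (Fin n)) → ℤ := fun i => x ↑i

lemma merge_apply_mem (S : Finset (Fin n)) (y : ↥(↑S : Set (Fin n)) → ℤ) (z : Fin n → ℤ)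
    {v : Fin n} (h : v ∈ S) : merge S y z v = y ⟨v, h⟩ := dif_pos h

lemma merge_apply_coe (S : Finset (Fin n)) (y : ↥(↑S : Set (Fin n)) → ℤ) (z : Fin n → ℤ)
    (v : ↥(↑S : Set (Fin n))) : merge S y z ↑v = y v := by
  rw [merge_apply_mem S y z v.2]

lemma merge_apply_not_mem (S : Finset (Fin n)) (y : ↥(↑S : Set (Fin n)) → ℤ) (z : Fin n → ℤ)
    {v : Fin n} (h : v ∉ S) : merge S y z v = z v := dif_neg h

lemma merge_mem_cube {S : Finset (Fin n)} {y : ↥(↑S : Set (Fin n)) → ℤ} {z : Fin n → ℤ}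
    (hy : y ∈ cube _) (hz : z ∈ cube (Fin n)) : merge S y z ∈ cube (Fin n) := by
  rw [mem_cube] at *
  intro i
  by_cases h : i ∈ S
  · rw [merge_apply_mem S y z h]; exact hy _
  · rw [merge_apply_not_mem S y z h]; exact hz _

lemma restr_mem_cube {S : Finset (Fin n)} {x : Fin n → ℤ} (hx : x ∈ cube (Fin n)) :
    restr S x ∈ cube _ := by
  rw [mem_cube] at *
  intro i; exact hx _

lemma merge_flip (S : Finset (Fin n)) (y : ↥(↑S : Set (Fin n)) → ℤ) (z : Fin n → ℤ)
    (v : ↥(↑S : Set (Fin n))) :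
    merge S (flipAt y v) z = flipAt (merge S y z) ↑v := by
  funext w
  by_cases hw : w ∈ S
  · rw [merge_apply_mem S _ z hw, flipAt, flipAt, Function.update_apply, Function.update_apply]
    by_cases hwv : w = (v : Fin n)
    · have : (⟨w, hw⟩ : ↥(↑S : Set (Fin n))) = v := Subtype.ext hwv
      rw [if_pos this, if_pos hwv, merge_apply_coe]
    · have : (⟨w, hw⟩ : ↥(↑S : Set (Fin n))) ≠ v := fun h => hwv (congrArg Subtype.val h)
      rw [if_neg this, if_neg hwv, merge_apply_mem S y z hw]
  · have hwv : w ≠ (v : Fin n) := fun h => hw (h ▸ v.2)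
    rw [merge_apply_not_mem S _ z hw, flipAt, Function.update_apply, if_neg hwv,
      merge_apply_not_mem S y z hw]

lemma sum_merge (S : Finset (Fin n)) (H : (Fin n → ℤ) → ℝ) :
    ∑ y ∈ cube (↥(↑S : Set (Fin n))), ∑ z ∈ cube (Fin n), H (merge S y z)
      = (cube (↥(↑S : Set (Fin n)))).card * ∑ x ∈ cube (Fin n), H x := by
  rw [← Finset.sum_product']
  rw [show ((cube (↥(↑S : Set (Fin n)))).card : ℝ) * ∑ x ∈ cube (Fin n), H x
      = ∑ x ∈ cube (Fin n), ∑ _w ∈ cube (↥(↑S : Set (Fin n))), H x by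
    rw [Finset.sum_comm]; simp [Finset.sum_const, nsmul_eq_mul, Finset.mul_sum]]
  rw [← Finset.sum_product']
  refine Finset.sum_nbij' (fun p => (merge S p.1 p.2, restr S p.2))
    (fun q => (restr S q.1, merge S q.2 q.1)) ?_ ?_ ?_ ?_ ?_
  · rintro ⟨y, z⟩ hp
    simp only [Finset.mem_product] at hp ⊢
    exact ⟨merge_mem_cube hp.1 hp.2, restr_mem_cube hp.2⟩
  · rintro ⟨x, w⟩ hq
    simp only [Finset.mem_product] at hq ⊢
    exact ⟨restr_mem_cube hq.1, merge_mem_cube hq.2 hq.1⟩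
  · rintro ⟨y, z⟩ _
    simp only [Prod.mk.injEq]
    constructor
    · funext i
      simp [restr, merge_apply_coe]
    · funext v
      by_cases h : v ∈ S
      · rw [merge_apply_mem S _ _ h]; rfl
      · rw [merge_apply_not_mem S _ _ h, merge_apply_not_mem S _ _ h]
  · rintro ⟨x, w⟩ _
    simp only [Prod.mk.injEq]
    constructor
    · funext v
      by_cases h : v ∈ S
      · rw [merge_apply_mem S _ _ h]; rfl
      · rw [merge_apply_not_mem S _ _ h, merge_apply_not_mem S _ _ h]
    · funext i
      simp [restr, merge_apply_coe]
  · rintro ⟨y, z⟩ _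
    rfl

end RCL

namespace RCL

variable {n : ℕ}

lemma coordInf_restrict (S : Finset (Fin n)) (f : (Fin n → ℤ) → ℤ)
    (v : ↥(↑S : Set (Fin n))) :
    coordInf f ↑v
      = (∑ z ∈ cube (Fin n), coordInf (fun y => f (merge S y z)) v) / (cube (Fin n)).card := by
  have key : ∑ z ∈ cube (Fin n), coordInf (fun y => f (merge S y z)) v
      = ∑ x ∈ cube (Fin n), if f x ≠ f (flipAt x ↑v) then (1:ℝ) else 0 := by
    have h1 : ∀ z, coordInf (fun y => f (merge S y z)) v
        = (∑ y ∈ cube (↥(↑S : Set (Fin n))),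
            if f (merge S y z) ≠ f (flipAt (merge S y z) ↑v) then (1:ℝ) else 0)
          / (cube (↥(↑S : Set (Fin n)))).card := by
      intro z
      rw [coordInf]
      congr 1
      apply Finset.sum_congr rfl
      intro y _
      rw [merge_flip]
      congr!
    simp only [h1]
    rw [← Finset.sum_div, Finset.sum_comm, sum_merge S
      (fun x => if f x ≠ f (flipAt x ↑v) then (1:ℝ) else 0)]
    rw [mul_comm, mul_div_assoc, div_self (ne_of_gt (cube_card_pos _)), mul_one]
  rw [key, coordInf]
  congr 1
  apply Finset.sum_congr rfl
  intro x _
  congr!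

lemma mem_cube_any {V : Type*} [Fintype V] {d₁ d₂ : DecidableEq V} {x : V → ℤ}
    (h : x ∈ @cube V _ d₁) : x ∈ @cube V _ d₂ := by
  have : @cube V _ d₁ = @cube V _ d₂ := by congr!
  exact this ▸ h

lemma quadPoly_merge (S : Finset (Fin n)) (a : Fin n → Fin n → ℝ) (b : Fin n → ℝ) (c : ℝ)
    (y : ↥(↑S : Set (Fin n)) → ℤ) (z : Fin n → ℤ) :
    quadPoly a b c (merge S y z)
    = quadPoly (V := ↥(↑S : Set (Fin n))) (fun i j => a ↑i ↑j)
        (fun i => b ↑i + ∑ j ∈ Sᶜ, ((if ↑i < j then a ↑i j else 0)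
            + (if j < ↑i then a j ↑i else 0)) * (z j : ℝ))
        (c + (∑ i ∈ Sᶜ, b i * (z i : ℝ))
          + ∑ i ∈ Sᶜ, ∑ j ∈ Sᶜ, (if i < j then a i j * (z i : ℝ) * (z j : ℝ) else 0)) y := by
  set m : Fin n → ℤ := merge S y z with hm
  have hmc : ∀ v : ↥(↑S : Set (Fin n)), m ↑v = y v := merge_apply_coe S y z
  have hmz : ∀ v ∈ Sᶜ, m v = z v := fun v hv =>
    merge_apply_not_mem S y z (Finset.mem_compl.1 hv)
  simp only [quadPoly]
  -- split the quadratic part of the LHS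
  have hq : (∑ i : Fin n, ∑ j : Fin n, if i < j then a i j * (m i : ℝ) * (m j : ℝ) else 0)
      = (∑ i ∈ S, ∑ j ∈ S, if i < j then a i j * (m i : ℝ) * (m j : ℝ) else 0)
        + ((∑ i ∈ S, ∑ j ∈ Sᶜ, if i < j then a i j * (m i : ℝ) * (m j : ℝ) else 0)
          + (∑ i ∈ S, ∑ j ∈ Sᶜ, if j < i then a j i * (m j : ℝ) * (m i : ℝ) else 0))
        + (∑ i ∈ Sᶜ, ∑ j ∈ Sᶜ, if i < j then a i j * (m i : ℝ) * (m j : ℝ) else 0) := by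
    rw [← Finset.sum_add_sum_compl S
      (fun i => ∑ j : Fin n, if i < j then a i j * (m i : ℝ) * (m j : ℝ) else 0)]
    have h1 : ∀ i : Fin n, (∑ j : Fin n, if i < j then a i j * (m i : ℝ) * (m j : ℝ) else 0)
        = (∑ j ∈ S, if i < j then a i j * (m i : ℝ) * (m j : ℝ) else 0)
          + ∑ j ∈ Sᶜ, if i < j then a i j * (m i : ℝ) * (m j : ℝ) else 0 :=
      fun i => (Finset.sum_add_sum_compl S
        (fun j => if i < j then a i j * (m i : ℝ) * (m j : ℝ) else 0)).symm
    simp only [h1]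
    rw [Finset.sum_add_distrib, Finset.sum_add_distrib,
      Finset.sum_comm (s := Sᶜ) (t := S)
        (f := fun i j => if i < j then a i j * (m i : ℝ) * (m j : ℝ) else 0)]
    ring
  -- split the linear part of the LHS
  have hb : (∑ i : Fin n, b i * (m i : ℝ))
      = ∑ i ∈ S, b i * (m i : ℝ) + ∑ i ∈ Sᶜ, b i * (z i : ℝ) := by
    rw [← Finset.sum_add_sum_compl S (fun i => b i * (m i : ℝ))]
    congr 1
    exact Finset.sum_congr rfl fun i hi => by rw [hmz i hi]
  -- constant part of the RHS
  have hcc : (∑ i ∈ Sᶜ, ∑ j ∈ Sᶜ, (if i < j then a i j * (z i : ℝ) * (z j : ℝ) else 0))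
      = ∑ i ∈ Sᶜ, ∑ j ∈ Sᶜ, if i < j then a i j * (m i : ℝ) * (m j : ℝ) else 0 := by
    refine Finset.sum_congr rfl fun i hi => Finset.sum_congr rfl fun j hj => ?_
    rw [hmz i hi, hmz j hj]
  -- quadratic part of the RHS
  have hA : (∑ i : ↥(↑S : Set (Fin n)), ∑ j : ↥(↑S : Set (Fin n)),
        if i < j then a ↑i ↑j * (y i : ℝ) * (y j : ℝ) else 0)
      = ∑ i ∈ S, ∑ j ∈ S, if i < j then a i j * (m i : ℝ) * (m j : ℝ) else 0 := by
    rw [Finset.sum_subtype S (fun x => Finset.mem_coe.symm)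
      (fun i => ∑ j ∈ S, if i < j then a i j * (m i : ℝ) * (m j : ℝ) else 0)]
    refine Finset.sum_congr rfl fun i _ => ?_
    rw [Finset.sum_subtype S (fun x => Finset.mem_coe.symm)
      (fun j => if (i : Fin n) < j then a ↑i j * (m ↑i : ℝ) * (m j : ℝ) else 0)]
    refine Finset.sum_congr rfl fun j _ => ?_
    simp only [← hmc, Subtype.coe_lt_coe]
  -- linear part of the RHS
  have hB : (∑ i : ↥(↑S : Set (Fin n)),
        (b ↑i + ∑ j ∈ Sᶜ, ((if ↑i < j then a ↑i j else 0)
            + (if j < ↑i then a j ↑i else 0)) * (z j : ℝ)) * (y i : ℝ))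
      = ∑ i ∈ S, b i * (m i : ℝ)
        + ((∑ i ∈ S, ∑ j ∈ Sᶜ, if i < j then a i j * (m i : ℝ) * (m j : ℝ) else 0)
          + (∑ i ∈ S, ∑ j ∈ Sᶜ, if j < i then a j i * (m j : ℝ) * (m i : ℝ) else 0)) := by
    simp only [← hmc]
    rw [← Finset.sum_subtype S (fun x => Finset.mem_coe.symm)
      (fun i => (b i + ∑ j ∈ Sᶜ, ((if i < j then a i j else 0)
            + (if j < i then a j i else 0)) * (z j : ℝ)) * (m i : ℝ))]
    rw [← Finset.sum_add_distrib, ← Finset.sum_add_distrib]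
    refine Finset.sum_congr rfl fun i _ => ?_
    rw [add_mul, Finset.sum_mul, ← Finset.sum_add_distrib]
    congr 1
    refine Finset.sum_congr rfl fun j hj => ?_
    rw [hmz j hj]
    split_ifs with h1 h2 h3
    · exact absurd h2 (asymm h1)
    · ring
    · ring
    · ring
  rw [hq, hb, hA, hB, hcc]
  ring

lemma restrict_isQTF {G : SimpleGraph (Fin n)} {f : (Fin n → ℤ) → ℤ}
    (hf : IsQTFSupportedOn G f) (S : Finset (Fin n)) {z : Fin n → ℤ} (hz : z ∈ cube (Fin n)) :
    IsQTFSupportedOn (G.induce (↑S : Set (Fin n))) (fun y => f (merge S y z)) := by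
  obtain ⟨a, b, c, hadj, hnz, hrep⟩ := hf
  refine ⟨fun i j => a ↑i ↑j,
    fun i => b ↑i + ∑ j ∈ Sᶜ, ((if ↑i < j then a ↑i j else 0)
        + (if j < ↑i then a j ↑i else 0)) * (z j : ℝ),
    c + (∑ i ∈ Sᶜ, b i * (z i : ℝ))
      + ∑ i ∈ Sᶜ, ∑ j ∈ Sᶜ, (if i < j then a i j * (z i : ℝ) * (z j : ℝ) else 0),
    ?_, ?_, ?_⟩
  · intro i j hij hne
    exact hadj ↑i ↑j (Subtype.coe_lt_coe.2 hij) hne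
  · intro y hy
    rw [← quadPoly_merge]
    exact hnz _ (mem_cube_any (merge_mem_cube (mem_cube_any hy) (mem_cube_any hz)))
  · intro y hy
    rw [← quadPoly_merge]
    exact hrep _ (mem_cube_any (merge_mem_cube (mem_cube_any hy) (mem_cube_any hz)))

set_option maxHeartbeats 1000000 in
lemma sum_coordInf_le_maxInf {G : SimpleGraph (Fin n)} {f : (Fin n → ℤ) → ℤ}
    (hf : IsQTFSupportedOn G f) (S : Finset (Fin n)) :
    ∑ v ∈ S, coordInf f v ≤ maxInf (G.induce (↑S : Set (Fin n))) := by
  have h1 : ∑ v ∈ S, coordInf f v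
      = ∑ v : ↥(↑S : Set (Fin n)), coordInf f ↑v := by
    rw [Finset.sum_subtype S (fun x => Finset.mem_coe.symm) (coordInf f)]
  rw [h1]
  have h2 : ∑ v : ↥(↑S : Set (Fin n)), coordInf f ↑v
      = (∑ z ∈ cube (Fin n), totalInf (fun y => f (merge S y z))) / (cube (Fin n)).card := by
    simp only [coordInf_restrict S f, totalInf, ← Finset.sum_div]
    rw [Finset.sum_comm]
  rw [h2, div_le_iff₀ (cube_card_pos _)]
  have h3 : ∀ z ∈ cube (Fin n), totalInf (fun y => f (merge S y z))
      ≤ maxInf (G.induce (↑S : Set (Fin n))) :=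
    fun z hz => totalInf_le_maxInf (restrict_isQTF hf S hz)
  have h4 := Finset.sum_le_sum h3
  rw [Finset.sum_const, nsmul_eq_mul] at h4
  exact h4.trans_eq (by ring)

end RCL


/-- Randomized covering lemma: given a cover `Vs 1, …, Vs k` of the vertices of `G` and a
probability distribution `p` on the cover such that every vertex is covered with probability
at least `ε`, every QTF supported on `G` has
`I[f] ≤ (1/ε) · E_{i ∼ p}[ I[G_i] ]`. -/
theorem randomized_covering_lemma {n k : ℕ} (G : SimpleGraph (Fin n))
    (Vs : Fin k → Finset (Fin n)) (hcover : ∀ v : Fin n, ∃ i, v ∈ Vs i)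
    (p : Fin k → ℝ) (hp : ∀ i, 0 ≤ p i) (hp1 : ∑ i, p i = 1)
    (ε : ℝ) (hε : 0 < ε)
    (hcov : ∀ v : Fin n, ε ≤ ∑ i ∈ Finset.univ.filter (fun i => v ∈ Vs i), p i)
    (f : (Fin n → ℤ) → ℤ) (hf : IsQTFSupportedOn G f) :
    totalInf f ≤ (1 / ε) * ∑ i : Fin k, p i * maxInf (G.induce (↑(Vs i) : Set (Fin n))) := by
  have h1 : ∀ i : Fin k, ∑ v ∈ Vs i, coordInf f v ≤ maxInf (G.induce (↑(Vs i) : Set (Fin n))) :=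
    fun i => RCL.sum_coordInf_le_maxInf hf (Vs i)
  have h2 : ε * totalInf f
      ≤ ∑ i : Fin k, p i * maxInf (G.induce (↑(Vs i) : Set (Fin n))) := by
    have e1 : ε * totalInf f = ∑ v : Fin n, ε * coordInf f v := by
      rw [totalInf, Finset.mul_sum]
    rw [e1]
    have e2 : ∀ v : Fin n, ε * coordInf f v
        ≤ ∑ i ∈ Finset.univ.filter (fun i => v ∈ Vs i), p i * coordInf f v := by
      intro v
      rw [← Finset.sum_mul]
      exact mul_le_mul_of_nonneg_right (hcov v) (RCL.coordInf_nonneg f v)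
    refine le_trans (Finset.sum_le_sum fun v _ => e2 v) ?_
    have e3 : (∑ v : Fin n, ∑ i ∈ Finset.univ.filter (fun i => v ∈ Vs i), p i * coordInf f v)
        = ∑ i : Fin k, p i * ∑ v ∈ Vs i, coordInf f v := by
      simp only [Finset.sum_filter]
      rw [Finset.sum_comm]
      refine Finset.sum_congr rfl fun i _ => ?_
      rw [Finset.mul_sum]
      rw [← Finset.sum_filter]
      congr 1
      ext v
      simp
    rw [e3]
    exact Finset.sum_le_sum fun i _ => mul_le_mul_of_nonneg_left (h1 i) (hp i)
  have hε' : (0:ℝ) < 1 / ε := by positivity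
  calc totalInf f = (1 / ε) * (ε * totalInf f) := by field_simp
    _ ≤ (1 / ε) * ∑ i : Fin k, p i * maxInf (G.induce (↑(Vs i) : Set (Fin n))) :=
        mul_le_mul_of_nonneg_left h2 (le_of_lt hε')
end
end

section
/- Let G be a graph on vertex set {1,...,n} with chromatic number χ(G). Then every QTF f : {-1,1}^n → {-1,1} supported on G satisfies I[f] ≤ √(χ(G)) · √n. -/
open Finset
open scoped Classical

noncomputable section

set_option linter.unusedSectionVars false

section QTFAux
variable {V : Type*} [Fintype V] [DecidableEq V]

lemma mem_cube {x : V → ℤ} : x ∈ cube V ↔ ∀ i, x i = -1 ∨ x i = 1 := by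
  simp [cube, Fintype.mem_piFinset]

lemma flipAt_self (x : V → ℤ) (i : V) : flipAt x i i = -(x i) := by
  simp [flipAt]

lemma flipAt_ne (x : V → ℤ) {i j : V} (h : j ≠ i) : flipAt x i j = x j := by
  simp [flipAt, h]

lemma flipAt_mem {x : V → ℤ} (hx : x ∈ cube V) (i : V) : flipAt x i ∈ cube V := by
  rw [mem_cube] at hx ⊢
  intro j
  rcases eq_or_ne j i with rfl | h
  · rw [flipAt_self]; rcases hx j with h' | h' <;> simp [h']
  · rw [flipAt_ne _ h]; exact hx j

lemma flipAt_flipAt (x : V → ℤ) (i : V) : flipAt (flipAt x i) i = x := by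
  funext j
  rcases eq_or_ne j i with rfl | h
  · simp [flipAt]
  · rw [flipAt_ne _ h, flipAt_ne _ h]

lemma flipAt_ne_self {x : V → ℤ} (hx : x ∈ cube V) (i : V) : flipAt x i ≠ x := by
  intro h
  have := congrFun h i
  rw [flipAt_self] at this
  rcases (mem_cube.1 hx) i with h' | h' <;> omega

lemma flipAt_involutive (i : V) : Function.Involutive (fun x : V → ℤ => flipAt x i) :=
  fun x => flipAt_flipAt x i

lemma cube_sq_one {x : V → ℤ} (hx : x ∈ cube V) (i : V) : (x i : ℝ) * (x i : ℝ) = 1 := by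
  rcases (mem_cube.1 hx) i with h' | h' <;> simp [h']

lemma cube_card_pos : 0 < (cube V).card := by
  apply Finset.card_pos.2
  exact ⟨fun _ => 1, mem_cube.2 fun i => Or.inr rfl⟩

end QTFAux

lemma sgn_pos {t : ℝ} (h : 0 < t) : sgn t = 1 := by simp [sgn, h]
lemma sgn_neg {t : ℝ} (h : t < 0) : sgn t = -1 := by simp [sgn, h, asymm h]
lemma abs_sgn_le (t : ℝ) : |(sgn t : ℝ)| ≤ 1 := by
  unfold sgn
  split_ifs <;> simp

lemma pointwise_ind (u v L e : ℝ) (xi : ℤ) (hxi : xi = -1 ∨ xi = 1)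
    (hu : u ≠ 0) (hv : v ≠ 0) (hL : u - v = 2 * (xi : ℝ) * L) (he : e = (sgn L : ℝ)) :
    (if sgn u ≠ sgn v then (1 : ℝ) else 0)
      = (1/2) * ((sgn u : ℝ) - (sgn v : ℝ)) * (e * (xi : ℝ)) := by
  by_cases hne : sgn u = sgn v
  · simp [hne]
  · rw [if_pos hne]
    rcases hu.lt_or_gt with h1 | h1
    · have hsu : sgn u = -1 := sgn_neg h1
      have h2 : 0 < v := by
        rcases hv.lt_or_gt with h2 | h2
        · exact absurd (by rw [hsu, sgn_neg h2]) hne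
        · exact h2
      have hsv : sgn v = 1 := sgn_pos h2
      have huv : u - v < 0 := by linarith
      rw [hL] at huv
      rcases hxi with hx | hx
      · have hLpos : 0 < L := by rw [hx] at huv; push_cast at huv; nlinarith
        rw [hsu, hsv, he, sgn_pos hLpos, hx]; push_cast; ring
      · have hLneg : L < 0 := by rw [hx] at huv; push_cast at huv; nlinarith
        rw [hsu, hsv, he, sgn_neg hLneg, hx]; push_cast; ring
    · have hsu : sgn u = 1 := sgn_pos h1
      have h2 : v < 0 := by
        rcases hv.lt_or_gt with h2 | h2
        · exact h2
        · exact absurd (by rw [hsu, sgn_pos h2]) hne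
      have hsv : sgn v = -1 := sgn_neg h2
      have huv : 0 < u - v := by linarith
      rw [hL] at huv
      rcases hxi with hx | hx
      · have hLneg : L < 0 := by rw [hx] at huv; push_cast at huv; nlinarith
        rw [hsu, hsv, he, sgn_neg hLneg, hx]; push_cast; ring
      · have hLpos : 0 < L := by rw [hx] at huv; push_cast at huv; nlinarith
        rw [hsu, hsv, he, sgn_pos hLpos, hx]; push_cast; ring

section Main
variable {V : Type*} [Fintype V] [LinearOrder V]

/-- symmetrized coefficient -/
def Asym (a : V → V → ℝ) (i j : V) : ℝ :=
  if i < j then a i j else if j < i then a j i else 0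

/-- the linear part relevant to coordinate `i` -/
def lin (a : V → V → ℝ) (b : V → ℝ) (i : V) (x : V → ℤ) : ℝ :=
  b i + ∑ j : V, Asym a i j * (x j : ℝ)

/-- the sign of the linear part -/
def eps (a : V → V → ℝ) (b : V → ℝ) (i : V) (x : V → ℤ) : ℝ :=
  (sgn (lin a b i x) : ℝ)

lemma Asym_diag (a : V → V → ℝ) (i : V) : Asym a i i = 0 := by simp [Asym]

lemma lin_flipAt (a : V → V → ℝ) (b : V → ℝ) {i j : V} (h : Asym a i j = 0)
    (x : V → ℤ) : lin a b i (flipAt x j) = lin a b i x := by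
  unfold lin
  congr 1
  apply Finset.sum_congr rfl
  intro k _
  rcases eq_or_ne k j with rfl | hk
  · rw [h]; ring
  · rw [flipAt_ne _ hk]

lemma eps_flipAt (a : V → V → ℝ) (b : V → ℝ) {i j : V} (h : Asym a i j = 0)
    (x : V → ℤ) : eps a b i (flipAt x j) = eps a b i x := by
  unfold eps; rw [lin_flipAt a b h]

lemma key_diff (a : V → V → ℝ) (b : V → ℝ) (c : ℝ) (x : V → ℤ) (i : V) :
    quadPoly a b c x - quadPoly a b c (flipAt x i) = 2 * (x i : ℝ) * lin a b i x := by
  set y := flipAt x i with hy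
  have hyi : (y i : ℝ) = -(x i : ℝ) := by rw [hy, flipAt_self]; push_cast; ring
  have hyne : ∀ j, j ≠ i → (y j : ℝ) = (x j : ℝ) := fun j hj => by rw [hy, flipAt_ne _ hj]
  have hD : ∀ i' j' : V,
      ((if i' < j' then a i' j' * x i' * x j' else 0) -
       (if i' < j' then a i' j' * y i' * y j' else 0)) =
      (if i' = i then (if i < j' then 2 * a i j' * x i * x j' else 0) else 0) +
      (if j' = i then (if i' < i then 2 * a i' i * x i' * x i else 0) else 0) := by
    intro i' j'
    rcases eq_or_ne i' i with rfl | hi'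
    · rcases eq_or_ne j' i' with rfl | hj'
      · simp [lt_irrefl]
      · rw [hyne j' hj', hyi]
        by_cases h : i' < j' <;> simp [h, hj', lt_irrefl] <;> ring
    · rcases eq_or_ne j' i with rfl | hj'
      · rw [hyne i' hi', hyi]
        by_cases h : i' < j' <;> simp [h, hi'] <;> ring
      · rw [hyne i' hi', hyne j' hj']
        simp [hi', hj']
  have hquad : (∑ i' : V, ∑ j' : V, if i' < j' then a i' j' * x i' * x j' else 0) -
      (∑ i' : V, ∑ j' : V, if i' < j' then a i' j' * y i' * y j' else 0) =
      2 * (x i : ℝ) * ∑ j : V, Asym a i j * (x j : ℝ) := by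
    rw [← Finset.sum_sub_distrib]
    simp_rw [← Finset.sum_sub_distrib, hD, Finset.sum_add_distrib]
    have e1 : (∑ i' : V, ∑ j' : V, if i' = i then (if i < j' then 2 * a i j' * (x i:ℝ) * x j' else 0) else 0)
        = ∑ j' : V, if i < j' then 2 * a i j' * (x i:ℝ) * x j' else 0 := by
      rw [Finset.sum_eq_single i]
      · simp
      · intro b _ hb; simp [hb]
      · intro h; exact absurd (Finset.mem_univ i) h
    have e2 : (∑ i' : V, ∑ j' : V, if j' = i then (if i' < i then 2 * a i' i * (x i':ℝ) * x i else 0) else 0)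
        = ∑ i' : V, if i' < i then 2 * a i' i * (x i':ℝ) * x i else 0 := by
      apply Finset.sum_congr rfl
      intro i' _
      rw [Finset.sum_ite_eq' Finset.univ i (fun _ => if i' < i then 2 * a i' i * (x i':ℝ) * x i else 0)]
      simp
    rw [e1, e2, Finset.mul_sum, ← Finset.sum_add_distrib]
    apply Finset.sum_congr rfl
    intro j _
    unfold Asym
    rcases lt_trichotomy i j with h | h | h
    · rw [if_pos h, if_neg (asymm h), if_pos h]; ring
    · subst h; simp [lt_irrefl]
    · rw [if_neg (asymm h), if_pos h, if_neg (asymm h), if_pos h]; ring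
  have hlinpart : (∑ j : V, b j * (x j : ℝ)) - (∑ j : V, b j * (y j : ℝ)) = 2 * b i * x i := by
    rw [← Finset.sum_sub_distrib]
    have : ∀ j : V, b j * (x j : ℝ) - b j * (y j : ℝ) = if j = i then 2 * b i * x i else 0 := by
      intro j
      rcases eq_or_ne j i with rfl | hj
      · rw [hyi]; simp; ring
      · rw [hyne j hj]; simp [hj]
    simp_rw [this]
    rw [Finset.sum_ite_eq' Finset.univ i (fun _ => 2 * b i * (x i : ℝ))]
    simp
  unfold quadPoly lin
  have hre : ∀ A B C D cc : ℝ, (A + B + cc) - (C + D + cc) = (A - C) + (B - D) := by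
    intros; ring
  rw [hre, hquad, hlinpart]
  ring

variable (a : V → V → ℝ) (b : V → ℝ) (c : ℝ) (f : (V → ℤ) → ℤ)
  (hp : ∀ x ∈ cube V, quadPoly a b c x ≠ 0)
  (hfs : ∀ x ∈ cube V, f x = sgn (quadPoly a b c x))

include hp hfs in
/-- influence formula: `Inf_i = E[f · ε_i · x_i]`. -/
lemma coordInf_eq (i : V) :
    coordInf f i = (∑ x ∈ cube V, (f x : ℝ) * (eps a b i x * (x i : ℝ))) / (cube V).card := by
  unfold coordInf
  congr 1
  trans (∑ x ∈ cube V, (1/2) * ((f x : ℝ) - (f (flipAt x i) : ℝ)) * (eps a b i x * (x i : ℝ)))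
  · apply Finset.sum_congr rfl
    intro x hx
    have hx' := flipAt_mem hx i
    by_cases h : f x = f (flipAt x i)
    · rw [if_neg (not_not_intro h), h]
      ring
    · rw [if_pos h]
      have hne : sgn (quadPoly a b c x) ≠ sgn (quadPoly a b c (flipAt x i)) := by
        intro e
        exact h (by rw [hfs x hx, hfs _ hx', e])
      have key := pointwise_ind (quadPoly a b c x) (quadPoly a b c (flipAt x i))
        (lin a b i x) (eps a b i x) (x i) ((mem_cube.1 hx) i) (hp x hx) (hp _ hx')
        (key_diff a b c x i) rfl
      rw [if_pos hne] at key
      rw [hfs x hx, hfs _ hx']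
      exact key
  · have hflip : (∑ x ∈ cube V, (f (flipAt x i) : ℝ) * (eps a b i x * (x i : ℝ)))
        = -∑ x ∈ cube V, (f x : ℝ) * (eps a b i x * (x i : ℝ)) := by
      rw [← Finset.sum_neg_distrib]
      apply Finset.sum_bijective (fun x : V → ℤ => flipAt x i)
        (flipAt_involutive i).bijective
      · intro x
        constructor
        · intro hx; exact flipAt_mem hx i
        · intro hx; have := flipAt_mem hx i; rwa [flipAt_flipAt] at this
      · intro x hx
        have h1 : eps a b i (flipAt x i) = eps a b i x := eps_flipAt a b (Asym_diag a i) x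
        have h2 : ((flipAt x i) i : ℝ) = -(x i : ℝ) := by rw [flipAt_self]; push_cast; ring
        rw [h1, h2]
        ring
    calc (∑ x ∈ cube V, (1/2) * ((f x : ℝ) - (f (flipAt x i) : ℝ)) * (eps a b i x * (x i : ℝ)))
        = (1/2) * ((∑ x ∈ cube V, (f x : ℝ) * (eps a b i x * (x i : ℝ)))
            - (∑ x ∈ cube V, (f (flipAt x i) : ℝ) * (eps a b i x * (x i : ℝ)))) := by
          rw [← Finset.sum_sub_distrib, Finset.mul_sum]
          apply Finset.sum_congr rfl
          intro x _; ring
      _ = _ := by rw [hflip]; ring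

include hp hfs in
/-- class bound: on a "quadratically independent" set `S`, `∑_{i∈S} Inf_i ≤ √|S|`. -/
lemma class_bound (S : Finset V) (hS : ∀ i ∈ S, ∀ j ∈ S, Asym a i j = 0) :
    ∑ i ∈ S, coordInf f i ≤ Real.sqrt S.card := by
  classical
  set N : ℝ := ((cube V).card : ℝ) with hN
  have hNpos : 0 < N := by
    rw [hN]; exact_mod_cast cube_card_pos
  set T : (V → ℤ) → ℝ := fun x => ∑ i ∈ S, eps a b i x * (x i : ℝ) with hT
  have habsf : ∀ x ∈ cube V, |(f x : ℝ)| = 1 := by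
    intro x hx
    rw [hfs x hx]
    rcases (hp x hx).lt_or_gt with h | h
    · rw [sgn_neg h]; norm_num
    · rw [sgn_pos h]; norm_num
  have step1 : ∑ i ∈ S, coordInf f i = (∑ x ∈ cube V, (f x : ℝ) * T x) / N := by
    have : ∀ i ∈ S, coordInf f i
        = (∑ x ∈ cube V, (f x : ℝ) * (eps a b i x * (x i : ℝ))) / N :=
      fun i _ => coordInf_eq a b c f hp hfs i
    rw [Finset.sum_congr rfl this, ← Finset.sum_div]
    congr 1
    rw [Finset.sum_comm]
    apply Finset.sum_congr rfl
    intro x _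
    rw [hT, Finset.mul_sum]
  have step2 : (∑ x ∈ cube V, (f x : ℝ) * T x) ≤ ∑ x ∈ cube V, |T x| := by
    apply Finset.sum_le_sum
    intro x hx
    calc (f x : ℝ) * T x ≤ |(f x : ℝ) * T x| := le_abs_self _
      _ = |T x| := by rw [abs_mul, habsf x hx, one_mul]
  -- second moment bound
  have hsq : ∑ x ∈ cube V, T x ^ 2 ≤ (S.card : ℝ) * N := by
    have expand : ∑ x ∈ cube V, T x ^ 2
        = ∑ i ∈ S, ∑ j ∈ S, ∑ x ∈ cube V,
            (eps a b i x * (x i : ℝ)) * (eps a b j x * (x j : ℝ)) := by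
      have : ∀ x, T x ^ 2 = ∑ i ∈ S, ∑ j ∈ S,
          (eps a b i x * (x i : ℝ)) * (eps a b j x * (x j : ℝ)) := by
        intro x
        rw [hT, sq, Finset.sum_mul_sum]
      rw [Finset.sum_congr rfl (fun x _ => this x)]
      rw [Finset.sum_comm]
      apply Finset.sum_congr rfl
      intro i _
      rw [Finset.sum_comm]
    rw [expand]
    have inner_le : ∀ i ∈ S, (∑ j ∈ S, ∑ x ∈ cube V,
        (eps a b i x * (x i : ℝ)) * (eps a b j x * (x j : ℝ))) ≤ N := by
      intro i hi
      have diag : (∑ x ∈ cube V, (eps a b i x * (x i : ℝ)) * (eps a b i x * (x i : ℝ))) ≤ N := by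
        rw [hN]
        calc (∑ x ∈ cube V, (eps a b i x * (x i : ℝ)) * (eps a b i x * (x i : ℝ)))
            ≤ ∑ _x ∈ cube V, (1 : ℝ) := by
              apply Finset.sum_le_sum
              intro x hx
              have h1 : (eps a b i x * (x i : ℝ)) * (eps a b i x * (x i : ℝ))
                  = (eps a b i x * eps a b i x) * ((x i : ℝ) * (x i : ℝ)) := by ring
              rw [h1, cube_sq_one hx i, mul_one]
              have := abs_sgn_le (lin a b i x)
              have h2 : |eps a b i x| ≤ 1 := this
              nlinarith [abs_nonneg (eps a b i x), le_abs_self (eps a b i x),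
                neg_abs_le (eps a b i x)]
          _ = N := by rw [Finset.sum_const, hN]; simp
      have offdiag : ∀ j ∈ S, j ≠ i → (∑ x ∈ cube V,
          (eps a b i x * (x i : ℝ)) * (eps a b j x * (x j : ℝ))) = 0 := by
        intro j hj hji
        apply Finset.sum_involution (fun x _ => flipAt x i)
        · intro x hx
          have e1 : eps a b i (flipAt x i) = eps a b i x := eps_flipAt a b (Asym_diag a i) x
          have e2 : eps a b j (flipAt x i) = eps a b j x :=
            eps_flipAt a b (hS j hj i hi) x
          have e3 : ((flipAt x i) i : ℝ) = -(x i : ℝ) := by rw [flipAt_self]; push_cast; ring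
          have e4 : ((flipAt x i) j : ℝ) = (x j : ℝ) := by rw [flipAt_ne _ hji]
          rw [e1, e2, e3, e4]
          ring
        · intro x hx _
          exact flipAt_ne_self hx i
        · intro x hx
          exact flipAt_mem hx i
        · intro x hx
          exact flipAt_flipAt x i
      calc (∑ j ∈ S, ∑ x ∈ cube V, (eps a b i x * (x i : ℝ)) * (eps a b j x * (x j : ℝ)))
          = ∑ j ∈ S, if j = i then (∑ x ∈ cube V,
              (eps a b i x * (x i : ℝ)) * (eps a b j x * (x j : ℝ))) else 0 := by
            apply Finset.sum_congr rfl
            intro j hj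
            rcases eq_or_ne j i with rfl | hji
            · rw [if_pos rfl]
            · rw [if_neg hji, offdiag j hj hji]
        _ = (∑ x ∈ cube V, (eps a b i x * (x i : ℝ)) * (eps a b i x * (x i : ℝ))) := by
            rw [Finset.sum_ite_eq' S i]
            simp [hi]
        _ ≤ N := diag
    calc (∑ i ∈ S, ∑ j ∈ S, ∑ x ∈ cube V,
          (eps a b i x * (x i : ℝ)) * (eps a b j x * (x j : ℝ)))
        ≤ ∑ _i ∈ S, N := Finset.sum_le_sum inner_le
      _ = (S.card : ℝ) * N := by rw [Finset.sum_const]; simp [mul_comm]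
  -- Cauchy-Schwarz
  have hCS : (∑ x ∈ cube V, |T x|) ^ 2 ≤ N * ∑ x ∈ cube V, T x ^ 2 := by
    have := sq_sum_le_card_mul_sum_sq (s := cube V) (f := fun x => |T x|)
    simp only [sq_abs] at this
    exact_mod_cast this
  have hsumabs : 0 ≤ ∑ x ∈ cube V, |T x| := Finset.sum_nonneg fun x _ => abs_nonneg _
  have key : ((∑ x ∈ cube V, |T x|) / N) ^ 2 ≤ (S.card : ℝ) := by
    rw [div_pow]
    rw [div_le_iff₀ (by positivity)]
    calc (∑ x ∈ cube V, |T x|) ^ 2 ≤ N * ∑ x ∈ cube V, T x ^ 2 := hCS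
      _ ≤ N * ((S.card : ℝ) * N) := by
          apply mul_le_mul_of_nonneg_left hsq hNpos.le
      _ = (S.card : ℝ) * N ^ 2 := by ring
  have final : (∑ x ∈ cube V, |T x|) / N ≤ Real.sqrt (S.card : ℝ) := by
    rw [Real.le_sqrt (by positivity) (Nat.cast_nonneg _)]
    exact key
  rw [step1]
  refine le_trans ?_ final
  gcongr
end Main

/-- Every QTF supported on a graph `G` with chromatic number `χ` satisfies
`I[f] ≤ √χ · √n`. -/
theorem qtf_influence_le_sqrt_chrom {n : ℕ} (G : SimpleGraph (Fin n)) (χ : ℕ)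
    (hχ : G.chromaticNumber = χ)
    (f : (Fin n → ℤ) → ℤ) (hf : IsQTFSupportedOn G f) :
    totalInf f ≤ Real.sqrt χ * Real.sqrt n := by
  classical
  obtain ⟨a, b, c, ha, hp, hfs⟩ := hf
  have hcol : G.Colorable χ :=
    (SimpleGraph.chromaticNumber_le_iff_colorable (G := G)).1 (le_of_eq hχ)
  obtain ⟨C⟩ := hcol
  set S : Fin χ → Finset (Fin n) := fun k => Finset.univ.filter (fun i => C i = k) with hSdef
  have hSindep : ∀ k, ∀ i ∈ S k, ∀ j ∈ S k, Asym a i j = 0 := by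
    intro k i hi j hj
    have hci : C i = k := (Finset.mem_filter.1 hi).2
    have hcj : C j = k := (Finset.mem_filter.1 hj).2
    by_contra hA
    unfold Asym at hA
    split_ifs at hA with h1 h2
    · exact C.valid (ha i j h1 hA) (hci.trans hcj.symm)
    · exact C.valid (ha j i h2 hA) (hcj.trans hci.symm)
    · exact hA rfl
  have hsplit : totalInf f = ∑ k : Fin χ, ∑ i ∈ S k, coordInf f i := by
    unfold totalInf
    rw [hSdef]
    exact (Finset.sum_fiberwise Finset.univ C (coordInf f)).symm
  have hbound : ∀ k : Fin χ, (∑ i ∈ S k, coordInf f i) ≤ Real.sqrt ((S k).card) := by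
    intro k
    have h := class_bound a b c f hp hfs (S k) (hSindep k)
    convert h using 3
  have hsum_card : ∑ k : Fin χ, ((S k).card : ℝ) = (n : ℝ) := by
    have : ∑ k : Fin χ, (S k).card = n := by
      rw [hSdef]
      simp only
      rw [Finset.sum_card_fiberwise_eq_card_filter]
      simp
    exact_mod_cast congrArg (Nat.cast : ℕ → ℝ) this
  set P : ℝ := ∑ k : Fin χ, Real.sqrt ((S k).card) with hP
  have hPnonneg : 0 ≤ P := Finset.sum_nonneg fun k _ => Real.sqrt_nonneg _
  have hPsq : P ^ 2 ≤ (χ : ℝ) * (n : ℝ) := by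
    calc P ^ 2 ≤ (Finset.univ : Finset (Fin χ)).card * ∑ k : Fin χ, Real.sqrt ((S k).card) ^ 2 :=
          sq_sum_le_card_mul_sum_sq
      _ = (χ : ℝ) * ∑ k : Fin χ, ((S k).card : ℝ) := by
          rw [Finset.card_univ, Fintype.card_fin]
          congr 1
          apply Finset.sum_congr rfl
          intro k _
          rw [Real.sq_sqrt (Nat.cast_nonneg _)]
      _ = (χ : ℝ) * (n : ℝ) := by rw [hsum_card]
  have hfinal : P ≤ Real.sqrt ((χ : ℝ) * (n : ℝ)) := by
    rw [Real.le_sqrt hPnonneg (by positivity)]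
    exact hPsq
  calc totalInf f = ∑ k : Fin χ, ∑ i ∈ S k, coordInf f i := hsplit
    _ ≤ P := Finset.sum_le_sum fun k _ => hbound k
    _ ≤ Real.sqrt ((χ : ℝ) * (n : ℝ)) := hfinal
    _ = Real.sqrt χ * Real.sqrt n := Real.sqrt_mul (Nat.cast_nonneg _) _
end
end
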